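/- arXiv:2211.00411 — 7 statements merged into one kernel-verified Lean document; each statement's English description precedes it below -/
import Mathlib

section
/- (Chew's theorem) A zero-dimensional T1 space X is ℕ-compact if and only if every clopen ultrafilter on X with the countable intersection property is fixed. -/
open Topology TopologicalSpace Set

open scoped Classical

universe u

/-- `X` is `E`-compact if it is homeomorphic to a closed subspace of a power `E^J`
for some nonempty index set `J`. -/
def IsECompact (E : Type*) (X : Type u)
    [TopologicalSpace E] [TopologicalSpace X] : Prop :=
  ∃ (J : Type u) (_ : Nonempty J) (e : X → J → E),
    IsEmbedding e ∧ IsClosed (Set.range e)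

/-- A clopen filter on `X`: a nonempty family of nonempty clopen subsets of `X`
closed under finite intersections and under clopen supersets. -/
def IsClopenFilter {X : Type u} [TopologicalSpace X] (F : Set (Set X)) : Prop :=
  F.Nonempty ∧ (∀ A ∈ F, IsClopen A ∧ A.Nonempty) ∧
    (∀ A ∈ F, ∀ B ∈ F, A ∩ B ∈ F) ∧
    (∀ A ∈ F, ∀ B : Set X, IsClopen B → A ⊆ B → B ∈ F)

/-- A clopen ultrafilter on `X`: a clopen filter not properly contained in any
clopen filter on `X`. -/
def IsClopenUltrafilter {X : Type u} [TopologicalSpace X] (F : Set (Set X)) : Prop :=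
  IsClopenFilter F ∧ ∀ G : Set (Set X), IsClopenFilter G → F ⊆ G → F = G

section Helpers

variable {X : Type u} [TopologicalSpace X]

lemma cf_univ_mem {F : Set (Set X)} (hF : IsClopenFilter F) : Set.univ ∈ F := by
  obtain ⟨⟨A, hA⟩, _, _, hsup⟩ := hF
  exact hsup A hA Set.univ isClopen_univ (Set.subset_univ A)

lemma cf_biInter_mem {F : Set (Set X)} (hF : IsClopenFilter F)
    {ι : Type*} (I : Finset ι) (s : ι → Set X) (h : ∀ i ∈ I, s i ∈ F) :
    (⋂ i ∈ I, s i) ∈ F := by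
  classical
  induction I using Finset.induction_on with
  | empty => simpa using cf_univ_mem hF
  | @insert a I ha ih =>
      rw [Finset.set_biInter_insert]
      exact hF.2.2.1 _ (h a (Finset.mem_insert_self _ _)) _
        (ih fun i hi => h i (Finset.mem_insert_of_mem hi))

lemma cuf_mem_or_compl {F : Set (Set X)} (hF : IsClopenUltrafilter F)
    {A : Set X} (hA : IsClopen A) : A ∈ F ∨ Aᶜ ∈ F := by
  obtain ⟨hFf, hmax⟩ := hF
  by_cases hmem : A ∈ F
  · exact Or.inl hmem
  by_cases hdis : ∃ B ∈ F, A ∩ B = ∅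
  · obtain ⟨B, hB, hAB⟩ := hdis
    refine Or.inr (hFf.2.2.2 B hB Aᶜ hA.compl ?_)
    intro x hx hxA
    have : x ∈ A ∩ B := ⟨hxA, hx⟩
    rw [hAB] at this
    exact this
  · push_neg at hdis
    exfalso
    obtain ⟨B₀, hB₀⟩ := hFf.1
    set G : Set (Set X) := {C | IsClopen C ∧ ∃ B ∈ F, A ∩ B ⊆ C} with hGdef
    have hAG : A ∈ G := ⟨hA, B₀, hB₀, Set.inter_subset_left⟩
    have hGf : IsClopenFilter G := by
      refine ⟨⟨A, hAG⟩, ?_, ?_, ?_⟩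
      · rintro C ⟨hC, B, hB, hsub⟩
        exact ⟨hC, (hdis B hB).mono hsub⟩
      · rintro C₁ ⟨hC₁, B₁, hB₁, h₁⟩ C₂ ⟨hC₂, B₂, hB₂, h₂⟩
        exact ⟨hC₁.inter hC₂, B₁ ∩ B₂, hFf.2.2.1 _ hB₁ _ hB₂,
          fun x hx => ⟨h₁ ⟨hx.1, hx.2.1⟩, h₂ ⟨hx.1, hx.2.2⟩⟩⟩
      · rintro C ⟨_, B, hB, hsub⟩ D hD hCD
        exact ⟨hD, B, hB, hsub.trans hCD⟩
    have hFG : F ⊆ G := fun B hB => ⟨(hFf.2.1 B hB).1, B, hB, Set.inter_subset_right⟩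
    have heq := hmax G hGf hFG
    rw [heq] at hmem
    exact hmem hAG

lemma exists_cuf {F : Set (Set X)} (hF : IsClopenFilter F) :
    ∃ U, IsClopenUltrafilter U ∧ F ⊆ U := by
  have hchainub : ∀ c ⊆ {G : Set (Set X) | IsClopenFilter G ∧ F ⊆ G},
      IsChain (· ⊆ ·) c → c.Nonempty →
      ∃ ub ∈ {G : Set (Set X) | IsClopenFilter G ∧ F ⊆ G}, ∀ s ∈ c, s ⊆ ub := by
    rintro c hcS hchain ⟨G₀, hG₀⟩
    refine ⟨⋃₀ c, ⟨⟨?_, ?_, ?_, ?_⟩, ?_⟩, fun s hs => Set.subset_sUnion_of_mem hs⟩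
    · obtain ⟨A, hA⟩ := (hcS hG₀).1.1
      exact ⟨A, G₀, hG₀, hA⟩
    · rintro A ⟨G, hG, hA⟩; exact (hcS hG).1.2.1 A hA
    · rintro A ⟨G₁, hG₁, hA⟩ B ⟨G₂, hG₂, hB⟩
      rcases hchain.total hG₁ hG₂ with h | h
      · exact ⟨G₂, hG₂, (hcS hG₂).1.2.2.1 A (h hA) B hB⟩
      · exact ⟨G₁, hG₁, (hcS hG₁).1.2.2.1 A hA B (h hB)⟩
    · rintro A ⟨G, hG, hA⟩ B hB hAB
      exact ⟨G, hG, (hcS hG).1.2.2.2 A hA B hB hAB⟩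
    · exact (hcS hG₀).2.trans (Set.subset_sUnion_of_mem hG₀)
  obtain ⟨U, hFU, hUmem, hUmax⟩ :=
    zorn_subset_nonempty {G : Set (Set X) | IsClopenFilter G ∧ F ⊆ G} hchainub F ⟨hF, subset_rfl⟩
  exact ⟨U, ⟨hUmem.1, fun G hG hUG =>
    subset_antisymm hUG (hUmax ⟨hG, hUmem.2.trans hUG⟩ hUG)⟩, hFU⟩

lemma ind_continuous {C : Set X} (hC : IsClopen C) :
    Continuous (C.piecewise (fun _ => (1 : ℕ)) fun _ => 0) :=
  Continuous.piecewise (by simp [hC.frontier_eq]) continuous_const continuous_const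

end Helpers

/-- (Chew's theorem.)  A zero-dimensional `T₁` space `X` is `ℕ`-compact if and only
if every clopen ultrafilter on `X` with the countable intersection property is
fixed. -/
theorem stmt9 {X : Type u} [TopologicalSpace X] [T1Space X]
    (hzd : IsTopologicalBasis {s : Set X | IsClopen s}) :
    IsECompact ℕ X ↔
    ∀ F : Set (Set X), IsClopenUltrafilter F →
      (∀ C ⊆ F, C.Countable → C.Nonempty → (⋂₀ C).Nonempty) →
      (⋂₀ F).Nonempty := by
  constructor
  · -- forward direction
    rintro ⟨J, hJ, e, hemb, hclosed⟩ U hU hCIP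
    classical
    set f : J → X → ℕ := fun j x => e x j with hf
    have hfcont : ∀ j, Continuous (f j) := fun j => (continuous_apply j).comp hemb.continuous
    have hpiece : ∀ j, ∃ m, f j ⁻¹' {m} ∈ U := by
      intro j
      by_contra hno; push_neg at hno
      have hcompl : ∀ m, (f j ⁻¹' {m})ᶜ ∈ U := by
        intro m
        rcases cuf_mem_or_compl hU ((isClopen_discrete _).preimage (hfcont j)) with h | h
        · exact absurd h (hno m)
        · exact h
      obtain ⟨x, hx⟩ := hCIP (Set.range fun m => (f j ⁻¹' {m})ᶜ)
        (by rintro _ ⟨m, rfl⟩; exact hcompl m) (Set.countable_range _) ⟨_, 0, rfl⟩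
      have := Set.mem_sInter.mp hx _ ⟨f j x, rfl⟩
      simp at this
    choose n hn using hpiece
    have hgcl : (fun j => n j) ∈ closure (Set.range e) := by
      rw [mem_closure_iff]
      intro o ho hgo
      obtain ⟨I, u, hIu, hsub⟩ := isOpen_pi_iff.mp ho _ hgo
      have hW : (⋂ j ∈ I, f j ⁻¹' {n j}) ∈ U := cf_biInter_mem hU.1 I _ (fun j _ => hn j)
      obtain ⟨x, hx⟩ := (hU.1.2.1 _ hW).2
      refine ⟨e x, hsub ?_, x, rfl⟩
      intro j hj
      have hxj : f j x = n j := Set.mem_iInter₂.mp hx j hj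
      have : e x j = n j := hxj
      rw [this]
      exact (hIu j hj).2
    obtain ⟨x₀, hx₀⟩ := hclosed.closure_subset hgcl
    refine ⟨x₀, Set.mem_sInter.mpr ?_⟩
    intro A hA
    by_contra hxA
    have hAcl := (hU.1.2.1 A hA).1
    obtain ⟨V, hV, hVeq⟩ := hemb.isInducing.isOpen_iff.mp hAcl.compl.isOpen
    have hx₀V : e x₀ ∈ V := by
      have : x₀ ∈ Aᶜ := hxA
      rw [← hVeq] at this
      exact this
    obtain ⟨I, u, hIu, hsub⟩ := isOpen_pi_iff.mp hV _ hx₀V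
    have hWU : (⋂ j ∈ I, f j ⁻¹' {e x₀ j}) ∈ U := by
      refine cf_biInter_mem hU.1 I _ (fun j _ => ?_)
      have : e x₀ j = n j := by rw [hx₀]
      rw [this]; exact hn j
    have hWsub : (⋂ j ∈ I, f j ⁻¹' {e x₀ j}) ⊆ Aᶜ := by
      intro x hx
      rw [← hVeq]
      refine hsub ?_
      intro j hj
      have hxj : f j x = e x₀ j := Set.mem_iInter₂.mp hx j hj
      have : e x j = e x₀ j := hxj
      rw [this]
      exact (hIu j hj).2
    have hAcU : Aᶜ ∈ U := hU.1.2.2.2 _ hWU _ hAcl.compl hWsub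
    have hbad := (hU.1.2.1 _ (hU.1.2.2.1 A hA Aᶜ hAcU)).2
    rw [Set.inter_compl_self] at hbad
    exact Set.not_nonempty_empty hbad
  · -- reverse direction
    intro hfix
    classical
    refine ⟨C(X, ℕ), ⟨ContinuousMap.const X 0⟩, fun x φ => φ x, ?_, ?_⟩
    · -- embedding
      have hcont : Continuous (fun x (φ : C(X, ℕ)) => φ x) :=
        continuous_pi fun φ => φ.continuous
      refine IsEmbedding.mk ?_ ?_
      · rw [isInducing_iff_nhds]
        intro x
        refine le_antisymm (Filter.tendsto_iff_comap.mp (hcont.tendsto x)) ?_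
        intro s hs
        obtain ⟨C, hC, hxC, hCs⟩ := hzd.mem_nhds_iff.mp hs
        set φ : C(X, ℕ) := ⟨C.piecewise (fun _ => 1) fun _ => 0, ind_continuous hC⟩ with hφ
        refine Filter.mem_comap.mpr ⟨(fun h : C(X, ℕ) → ℕ => h φ) ⁻¹' {1}, ?_, ?_⟩
        · refine IsOpen.mem_nhds (((continuous_apply φ).isOpen_preimage _ (isOpen_discrete _))) ?_
          simp only [Set.mem_preimage, Set.mem_singleton_iff]
          show C.piecewise (fun _ => (1 : ℕ)) (fun _ => 0) x = 1
          exact Set.piecewise_eq_of_mem _ _ _ hxC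
        · intro y hy
          simp only [Set.mem_preimage, Set.mem_singleton_iff] at hy
          by_cases hyC : y ∈ C
          · exact hCs hyC
          · exfalso
            have h0 : φ y = 0 := by
              show C.piecewise (fun _ => (1 : ℕ)) (fun _ => 0) y = 0
              exact Set.piecewise_eq_of_notMem _ _ _ hyC
            rw [h0] at hy
            exact one_ne_zero hy.symm
      · intro x y hxy
        by_contra hne
        have hopen : x ∈ ({y} : Set X)ᶜ := by simpa using hne
        obtain ⟨C, hC, hxC, hCsub⟩ :=
          hzd.exists_subset_of_mem_open hopen isClosed_singleton.isOpen_compl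
        set φ : C(X, ℕ) := ⟨C.piecewise (fun _ => 1) fun _ => 0, ind_continuous hC⟩ with hφ
        have h1 : φ x = 1 := by show C.piecewise (fun _ => (1 : ℕ)) (fun _ => 0) x = 1; exact Set.piecewise_eq_of_mem _ _ _ hxC
        have hyC : y ∉ C := fun h => (hCsub h) rfl
        have h0 : φ y = 0 := by show C.piecewise (fun _ => (1 : ℕ)) (fun _ => 0) y = 0; exact Set.piecewise_eq_of_notMem _ _ _ hyC
        have hcc : φ x = φ y := congrFun hxy φ
        rw [h1, h0] at hcc
        exact one_ne_zero hcc
    · -- closed range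
      set e : X → C(X, ℕ) → ℕ := fun x φ => φ x with he
      refine isClosed_of_closure_subset ?_
      intro g hg
      have key : ∀ s : Finset C(X, ℕ), ∃ x : X, ∀ φ ∈ s, φ x = g φ := by
        intro s
        have hVeq : {h : C(X, ℕ) → ℕ | ∀ φ ∈ s, h φ = g φ} =
            ⋂ φ ∈ s, (fun h : C(X, ℕ) → ℕ => h φ) ⁻¹' {g φ} := by
          ext h; simp
        have hV : IsOpen {h : C(X, ℕ) → ℕ | ∀ φ ∈ s, h φ = g φ} := by
          rw [hVeq]
          exact isOpen_biInter_finset fun φ _ =>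
            (continuous_apply φ).isOpen_preimage _ (isOpen_discrete _)
        obtain ⟨h, hhV, x, rfl⟩ := mem_closure_iff.mp hg _ hV (fun φ _ => rfl)
        exact ⟨x, hhV⟩
      set F₀ : Set (Set X) := {C | IsClopen C ∧ ∃ φ : C(X, ℕ), φ ⁻¹' {g φ} ⊆ C} with hF₀def
      have hF₀ : IsClopenFilter F₀ := by
        refine ⟨⟨Set.univ, isClopen_univ, ContinuousMap.const X 0, Set.subset_univ _⟩, ?_, ?_, ?_⟩
        · rintro C ⟨hC, φ, hsub⟩
          obtain ⟨x, hx⟩ := key {φ}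
          exact ⟨hC, x, hsub (by
            simp only [Set.mem_preimage, Set.mem_singleton_iff]
            exact hx φ (Finset.mem_singleton_self φ))⟩
        · rintro C₁ ⟨hC₁, φ₁, h₁⟩ C₂ ⟨hC₂, φ₂, h₂⟩
          have hkcont : Continuous fun x => Nat.pair (φ₁ x) (φ₂ x) := by
            have h : Continuous fun p : ℕ × ℕ => Nat.pair p.1 p.2 := continuous_of_discreteTopology
            exact h.comp (φ₁.continuous.prodMk φ₂.continuous)
          set k : C(X, ℕ) := ⟨fun x => Nat.pair (φ₁ x) (φ₂ x), hkcont⟩ with hk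
          refine ⟨hC₁.inter hC₂, k, ?_⟩
          intro x hx
          simp only [Set.mem_preimage, Set.mem_singleton_iff] at hx
          obtain ⟨y, hy⟩ := key {φ₁, φ₂, k}
          have hy1 : φ₁ y = g φ₁ := hy φ₁ (by simp)
          have hy2 : φ₂ y = g φ₂ := hy φ₂ (by simp)
          have hy3 : k y = g k := hy k (by simp)
          have hgk : g k = Nat.pair (g φ₁) (g φ₂) := by
            rw [← hy3, ← hy1, ← hy2]; rfl
          have hx' : Nat.pair (φ₁ x) (φ₂ x) = Nat.pair (g φ₁) (g φ₂) := by
            rw [← hgk]; exact hx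
          have hun := congrArg Nat.unpair hx'
          rw [Nat.unpair_pair, Nat.unpair_pair] at hun
          have e1 : φ₁ x = g φ₁ := congrArg Prod.fst hun
          have e2 : φ₂ x = g φ₂ := congrArg Prod.snd hun
          exact ⟨h₁ (by simpa using e1), h₂ (by simpa using e2)⟩
        · rintro C ⟨_, φ, hsub⟩ D hD hCD
          exact ⟨hD, φ, hsub.trans hCD⟩
      obtain ⟨U, hU, hF₀U⟩ := exists_cuf hF₀
      have hCIP : ∀ C ⊆ U, C.Countable → C.Nonempty → (⋂₀ C).Nonempty := by
        intro C hCU hCc hCne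
        by_contra hempty
        rw [Set.not_nonempty_iff_eq_empty] at hempty
        obtain ⟨seq, hseq⟩ := hCc.exists_eq_range hCne
        set D : ℕ → Set X := fun m => ⋂ i ∈ Finset.range (m + 1), seq i with hD
        have hDU : ∀ m, D m ∈ U := fun m =>
          cf_biInter_mem hU.1 _ _ (fun i _ => hCU (hseq ▸ Set.mem_range_self i))
        have hDclopen : ∀ m, IsClopen (D m) := fun m => (hU.1.2.1 _ (hDU m)).1
        have hDempty : ∀ x : X, ∃ m, x ∉ D m := by
          intro x
          by_contra hc; push_neg at hc
          have hmem : x ∈ ⋂₀ C := by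
            rw [hseq]
            rintro _ ⟨i, rfl⟩
            have := hc i
            simp only [hD, Set.mem_iInter] at this
            exact this i (Finset.mem_range.mpr (by omega))
          rw [hempty] at hmem
          exact hmem
        set ψ : X → ℕ := fun x => Nat.find (hDempty x) with hψ
        have hψpre : ∀ m, ψ ⁻¹' {m} = (D m)ᶜ ∩ ⋂ i ∈ Finset.range m, D i := by
          intro m; ext x
          simp only [Set.mem_preimage, Set.mem_singleton_iff, hψ, Nat.find_eq_iff,
            Set.mem_inter_iff, Set.mem_compl_iff, Set.mem_iInter, Finset.mem_range]
          constructor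
          · rintro ⟨h1, h2⟩; exact ⟨h1, fun i hi => not_not.mp (h2 i hi)⟩
          · rintro ⟨h1, h2⟩; exact ⟨h1, fun i hi => not_not_intro (h2 i hi)⟩
        have hψcont : Continuous ψ := by
          rw [continuous_discrete_rng]
          intro m
          rw [hψpre m]
          exact ((hDclopen m).compl.isOpen).inter
            (isOpen_biInter_finset fun i _ => (hDclopen i).isOpen)
        set ψc : C(X, ℕ) := ⟨ψ, hψcont⟩ with hψc
        have hmemU : ψc ⁻¹' {g ψc} ∈ U :=
          hF₀U ⟨(isClopen_discrete _).preimage hψcont, ψc, subset_rfl⟩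
        have hinter : ψc ⁻¹' {g ψc} ∩ D (g ψc) ∈ U := hU.1.2.2.1 _ hmemU _ (hDU _)
        obtain ⟨x, hx1, hx2⟩ := (hU.1.2.1 _ hinter).2
        have hx1' : ψ x = g ψc := hx1
        exact absurd hx2 (hx1' ▸ Nat.find_spec (hDempty x))
      obtain ⟨x, hx⟩ := hfix U hU hCIP
      refine ⟨x, funext fun φ => ?_⟩
      have hmem : φ ⁻¹' {g φ} ∈ U :=
        hF₀U ⟨(isClopen_discrete _).preimage φ.continuous, φ, subset_rfl⟩
      exact Set.mem_sInter.mp hx _ hmem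
end

section
/- A Tychonoff (completely regular T1) space X is realcompact if and only if every z-ultrafilter F on X with the weak countable intersection property is fixed, where F has the weak countable intersection property if for every sequence (f_n)_{n∈ℕ} of bounded continuous real-valued functions on X such that f_n⁻¹({0}) ∈ F for every n ∈ ℕ, the intersection ⋂_{n∈ℕ} f_n⁻¹({0}) is nonempty. -/
/-!
If `X` is closed in `ℝ^J` and `F` is a z-ultrafilter with the weak countable intersection
property, every coordinate `x ↦ x j` is bounded on some member of `F` (otherwise the bounded
functions `max (n - |x j|) 0` violate the property), so it has a cluster point `r j` along `F`,
and maximality of `F` upgrades this to convergence. Hence `F` converges to `r` in `ℝ^J`; as `X`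
is closed, `r ∈ X`, and `r` lies in every (closed) member of `F`.

Conversely, `X` embeds in `ℝ^C(X, ℝ)` by evaluation. A point `p` of the closure of the image
commutes with every continuous operation on coordinates, so the zero sets of the functions
killed by `p` form a z-ultrafilter with the countable intersection property; a point `x` of its
intersection satisfies `f x = p f` for all `f`.
-/

open Topology TopologicalSpace Set

universe u

/-- A zero-set of `X` is a set of the form `f ⁻¹' {0}` for a continuous
`f : X → ℝ`. -/
def IsZeroSet {X : Type u} [TopologicalSpace X] (Z : Set X) : Prop :=
  ∃ f : X → ℝ, Continuous f ∧ Z = f ⁻¹' {0}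

/-- A z-filter on `X`: a nonempty family of nonempty zero-sets of `X` closed under
finite intersections and under zero-set supersets. -/
def IsZFilter {X : Type u} [TopologicalSpace X] (F : Set (Set X)) : Prop :=
  F.Nonempty ∧ (∀ A ∈ F, IsZeroSet A ∧ A.Nonempty) ∧
    (∀ A ∈ F, ∀ B ∈ F, A ∩ B ∈ F) ∧
    (∀ A ∈ F, ∀ B : Set X, IsZeroSet B → A ⊆ B → B ∈ F)

/-- A z-ultrafilter on `X`: a z-filter not properly contained in any z-filter. -/
def IsZUltrafilter {X : Type u} [TopologicalSpace X] (F : Set (Set X)) : Prop :=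
  IsZFilter F ∧ ∀ G : Set (Set X), IsZFilter G → F ⊆ G → F = G

open Filter

def HasWeakCountableInterProp {X : Type u} [TopologicalSpace X] (F : Set (Set X)) : Prop :=
  ∀ f : ℕ → X → ℝ,
    (∀ n, Continuous (f n) ∧ (∃ M : ℝ, ∀ x : X, |f n x| ≤ M) ∧ (f n) ⁻¹' {0} ∈ F) →
    (⋂ n, (f n) ⁻¹' {0}).Nonempty

lemma min_abs_one_eq_zero_iff {a : ℝ} : min |a| 1 = 0 ↔ a = 0 := by
  rcases le_total |a| 1 with h | h
  · rw [min_eq_left h, abs_eq_zero]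
  · rw [min_eq_right h]
    constructor
    · exact fun h1 => absurd h1 one_ne_zero
    · rintro rfl
      norm_num at h

/-- Merges countably many real functions into one whose zero set is their common zero set. -/
noncomputable def seqGauge (a : ℕ → ℝ) : ℝ := ∑' n, (1 / 2 : ℝ) ^ n * min |a n| 1

lemma norm_seqGauge_term_le (a : ℕ → ℝ) (n : ℕ) :
    ‖(1 / 2 : ℝ) ^ n * min |a n| 1‖ ≤ (1 / 2 : ℝ) ^ n := by
  rw [norm_mul, norm_pow, Real.norm_of_nonneg (le_min (abs_nonneg _) zero_le_one)]
  norm_num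

lemma continuous_seqGauge : Continuous seqGauge :=
  continuous_tsum (fun n => by fun_prop) summable_geometric_two
    (fun n a => norm_seqGauge_term_le a n)

lemma seqGauge_eq_zero_iff {a : ℕ → ℝ} : seqGauge a = 0 ↔ ∀ n, a n = 0 := by
  have hs : Summable fun n => (1 / 2 : ℝ) ^ n * min |a n| 1 :=
    Summable.of_norm_bounded summable_geometric_two (norm_seqGauge_term_le a)
  rw [seqGauge, ← hs.hasSum_iff, hasSum_zero_iff_of_nonneg fun n => by positivity, funext_iff]
  simp [min_abs_one_eq_zero_iff]

section ZSets

variable {X : Type u} [TopologicalSpace X]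

lemma IsZeroSet.isClosed {Z : Set X} (hZ : IsZeroSet Z) : IsClosed Z := by
  obtain ⟨f, hf, rfl⟩ := hZ
  exact isClosed_singleton.preimage hf

lemma IsZeroSet.inter {Z₁ Z₂ : Set X} (h₁ : IsZeroSet Z₁) (h₂ : IsZeroSet Z₂) :
    IsZeroSet (Z₁ ∩ Z₂) := by
  obtain ⟨f, hf, rfl⟩ := h₁
  obtain ⟨g, hg, rfl⟩ := h₂
  refine ⟨fun x => |f x| + |g x|, by fun_prop, ?_⟩
  ext x
  simp [add_eq_zero_iff_of_nonneg, abs_nonneg]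

lemma isZeroSet_preimage_Icc {g : X → ℝ} (hg : Continuous g) (a b : ℝ) :
    IsZeroSet (g ⁻¹' Icc a b) := by
  refine ⟨fun x => max (a - g x) 0 + max (g x - b) 0, by fun_prop, ?_⟩
  ext x
  simp [add_eq_zero_iff_of_nonneg (le_max_right _ _) (le_max_right _ _)]

namespace IsZFilter

variable {F : Set (Set X)}

def toFilter (hF : IsZFilter F) : Filter X where
  sets := {S | ∃ Z ∈ F, Z ⊆ S}
  univ_sets := let ⟨Z, hZ⟩ := hF.1; ⟨Z, hZ, subset_univ Z⟩
  sets_of_superset := fun ⟨Z, hZ, hZS⟩ hST => ⟨Z, hZ, hZS.trans hST⟩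
  inter_sets := fun ⟨Z, hZ, hZS⟩ ⟨W, hW, hWT⟩ =>
    ⟨Z ∩ W, hF.2.2.1 Z hZ W hW, inter_subset_inter hZS hWT⟩

lemma neBot_toFilter (hF : IsZFilter F) : hF.toFilter.NeBot :=
  forall_mem_nonempty_iff_neBot.1 fun _ ⟨Z, hZ, hZS⟩ => (hF.2.1 Z hZ).2.mono hZS

lemma mem_sInter_of_tendsto (hF : IsZFilter F) {x : X} (hx : Tendsto id hF.toFilter (𝓝 x)) :
    x ∈ ⋂₀ F := by
  have := hF.neBot_toFilter
  exact fun Z hZ => (hF.2.1 Z hZ).1.isClosed.mem_of_tendsto hx ⟨Z, hZ, subset_rfl⟩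

end IsZFilter

namespace IsZUltrafilter

variable {F : Set (Set X)}

lemma exists_disjoint_of_notMem (hF : IsZUltrafilter F) {B : Set X} (hB : IsZeroSet B)
    (hBF : B ∉ F) : ∃ Z ∈ F, Disjoint B Z := by
  obtain ⟨⟨hne, hmem, hinter, -⟩, hmax⟩ := hF
  by_contra! hmeet
  let G : Set (Set X) := {C | IsZeroSet C ∧ ∃ Z ∈ F, B ∩ Z ⊆ C}
  have hFG : F ⊆ G := fun Z hZ => ⟨(hmem Z hZ).1, Z, hZ, inter_subset_right⟩
  have hG : IsZFilter G := by
    refine ⟨hne.mono hFG, ?_, ?_, ?_⟩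
    · rintro A ⟨hA, Z, hZ, hsub⟩
      exact ⟨hA, (not_disjoint_iff_nonempty_inter.1 (hmeet Z hZ)).mono hsub⟩
    · rintro A ⟨hA, Z, hZ, hAZ⟩ A' ⟨hA', Z', hZ', hAZ'⟩
      exact ⟨hA.inter hA', Z ∩ Z', hinter Z hZ Z' hZ',
        subset_inter ((inter_subset_inter_right B inter_subset_left).trans hAZ)
          ((inter_subset_inter_right B inter_subset_right).trans hAZ')⟩
    · rintro A ⟨-, Z, hZ, hsub⟩ A' hA' hAA'
      exact ⟨hA', Z, hZ, hsub.trans hAA'⟩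
  obtain ⟨Z, hZ⟩ := hne
  exact hBF ((hmax G hG hFG).symm ▸ ⟨hB, Z, hZ, inter_subset_left⟩)

lemma exists_preimage_Icc_mem (hF : IsZUltrafilter F) (hcip : HasWeakCountableInterProp F)
    {g : X → ℝ} (hg : Continuous g) : ∃ N : ℕ, g ⁻¹' Icc (-N) N ∈ F := by
  by_contra! hslab
  let b : ℕ → X → ℝ := fun n x => max ((n : ℝ) - |g x|) 0
  have hb : ∀ n, b n ⁻¹' {0} = {x | (n : ℝ) ≤ |g x|} := fun n => by ext x; simp [b]
  have hbF : ∀ n, b n ⁻¹' {0} ∈ F := by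
    intro n
    obtain ⟨W, hW, hdisj⟩ :=
      hF.exists_disjoint_of_notMem (isZeroSet_preimage_Icc hg _ _) (hslab n)
    refine hF.1.2.2.2 W hW _ ⟨b n, by fun_prop, rfl⟩ fun x hxW => ?_
    rw [hb]
    by_contra hlt
    exact hdisj.notMem_of_mem_right hxW (abs_le.1 (not_le.1 hlt).le)
  have hbnd : ∀ n x, |b n x| ≤ n := fun n x => by
    rw [abs_of_nonneg (le_max_right _ _)]
    exact max_le (by linarith [abs_nonneg (g x)]) n.cast_nonneg
  obtain ⟨x, hx⟩ := hcip b fun n => ⟨by fun_prop, ⟨n, hbnd n⟩, hbF n⟩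
  obtain ⟨n, hn⟩ := exists_nat_gt |g x|
  have hxn : (n : ℝ) ≤ |g x| := by simpa [hb] using mem_iInter.1 hx n
  linarith

lemma tendsto_of_clusterPt (hF : IsZUltrafilter F) {g : X → ℝ} (hg : Continuous g) {r : ℝ}
    (hr : ClusterPt r (map g hF.1.toFilter)) : Tendsto g hF.1.toFilter (𝓝 r) := by
  refine Metric.nhds_basis_closedBall.tendsto_right_iff.2 fun ε hε => ?_
  simp_rw [Real.closedBall_eq_Icc]
  by_contra hnear
  obtain ⟨W, hW, hdisj⟩ := hF.exists_disjoint_of_notMem (isZeroSet_preimage_Icc hg _ _)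
    fun hS => hnear ⟨_, hS, subset_rfl⟩
  have hfar : (Icc (r - ε) (r + ε))ᶜ ∈ map g hF.1.toFilter :=
    ⟨W, hW, fun x hxW => hdisj.notMem_of_mem_right hxW⟩
  obtain ⟨y, hyS, hyS'⟩ :=
    clusterPt_iff_nonempty.1 hr
      (Icc_mem_nhds (a := r - ε) (b := r + ε) (by linarith) (by linarith)) hfar
  exact hyS' hyS

lemma exists_tendsto (hF : IsZUltrafilter F) (hcip : HasWeakCountableInterProp F) {g : X → ℝ}
    (hg : Continuous g) : ∃ r, Tendsto g hF.1.toFilter (𝓝 r) := by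
  obtain ⟨N, hN⟩ := hF.exists_preimage_Icc_mem hcip hg
  have := hF.1.neBot_toFilter
  obtain ⟨r, -, hr⟩ := isCompact_Icc.exists_clusterPt (f := map g hF.1.toFilter)
    (le_principal_iff.2 ⟨_, hN, subset_rfl⟩)
  exact ⟨r, hF.tendsto_of_clusterPt hg hr⟩

theorem sInter_nonempty_of_isECompact (hX : IsECompact ℝ X) (hF : IsZUltrafilter F)
    (hcip : HasWeakCountableInterProp F) : (⋂₀ F).Nonempty := by
  obtain ⟨J, -, e, he, hcl⟩ := hX
  have := hF.1.neBot_toFilter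
  choose r hr using fun j => hF.exists_tendsto hcip ((continuous_apply j).comp he.continuous)
  have he_lim : Tendsto e hF.1.toFilter (𝓝 r) := tendsto_pi_nhds.2 hr
  obtain ⟨x, rfl⟩ := hcl.mem_of_tendsto he_lim (Eventually.of_forall mem_range_self)
  exact ⟨x, hF.1.mem_sInter_of_tendsto (he.tendsto_nhds_iff.2 he_lim)⟩

end IsZUltrafilter

end ZSets

def evalMap (X : Type u) [TopologicalSpace X] : X → C(X, ℝ) → ℝ := fun x f => f x

section Embedding

variable {X : Type u} [TopologicalSpace X]

lemma continuous_evalMap : Continuous (evalMap X) :=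
  continuous_pi fun f => f.continuous

lemma isEmbedding_evalMap [T0Space X] [CompletelyRegularSpace X] : IsEmbedding (evalMap X) := by
  refine IsInducing.isEmbedding (isInducing_iff_nhds.2 fun x =>
    le_antisymm (continuous_evalMap.tendsto x).le_comap fun U hU => ?_)
  obtain ⟨V, hVU, hV, hxV⟩ := mem_nhds_iff.1 hU
  obtain ⟨f, hf, hfx, hfV⟩ := CompletelyRegularSpace.completely_regular_isOpen x V hV hxV
  let g : C(X, ℝ) := ⟨fun y => f y, by fun_prop⟩
  refine mem_comap.2 ⟨{q | q g < 1},
    (isOpen_lt (continuous_apply g) continuous_const).mem_nhds (by simp [evalMap, g, hfx]),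
    fun y hy => hVU (not_not.1 fun hyV => ?_)⟩
  have hgy : g y = 1 := congrArg Subtype.val (hfV hyV)
  exact (lt_irrefl (1 : ℝ)) (hgy ▸ hy)

end Embedding

section ClosureOfRange

variable {X : Type u} [TopologicalSpace X] {p : C(X, ℝ) → ℝ}

lemma apply_eq_of_mem_closure_range (hp : p ∈ closure (range (evalMap X)))
    {φ ψ : (C(X, ℝ) → ℝ) → ℝ} (hφ : Continuous φ) (hψ : Continuous ψ)
    (h : ∀ x, φ (evalMap X x) = ψ (evalMap X x)) : φ p = ψ p :=
  EqOn.closure (by rintro _ ⟨x, rfl⟩; exact h x) hφ hψ hp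

lemma nonempty_preimage_zero_of_mem_closure_range (hp : p ∈ closure (range (evalMap X)))
    {f : C(X, ℝ)} (hf : p f = 0) : (f ⁻¹' {0}).Nonempty := by
  by_contra! hempty
  have hf0 : ∀ x, f x ≠ 0 := fun x hx => hempty.subset hx
  let finv : C(X, ℝ) := ⟨fun x => (f x)⁻¹, f.continuous.inv₀ hf0⟩
  have hinv : p f * p finv = 1 :=
    apply_eq_of_mem_closure_range hp (φ := fun q => q f * q finv) (ψ := fun _ => 1)
      (by fun_prop) (by fun_prop) fun x => mul_inv_cancel₀ (hf0 x)
  simp [hf] at hinv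

def zFilterOf (p : C(X, ℝ) → ℝ) : Set (Set X) :=
  {Z | IsZeroSet Z ∧ ∃ f : C(X, ℝ), p f = 0 ∧ f ⁻¹' {0} ⊆ Z}

lemma isZFilter_zFilterOf (hp : p ∈ closure (range (evalMap X))) : IsZFilter (zFilterOf p) := by
  have hp0 : p 0 = 0 := apply_eq_of_mem_closure_range hp (φ := fun q => q 0) (ψ := fun _ => 0)
    (by fun_prop) (by fun_prop) fun _ => rfl
  refine ⟨⟨_, ⟨_, map_continuous 0, rfl⟩, 0, hp0, subset_rfl⟩, ?_, ?_, ?_⟩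
  · rintro Z ⟨hZ, f, hf, hfZ⟩
    exact ⟨hZ, (nonempty_preimage_zero_of_mem_closure_range hp hf).mono hfZ⟩
  · rintro Z ⟨hZ, f, hf, hfZ⟩ W ⟨hW, g, hg, hgW⟩
    let h : C(X, ℝ) := ⟨fun x => |f x| + |g x|, by fun_prop⟩
    have hph : p h = |p f| + |p g| := apply_eq_of_mem_closure_range hp (φ := fun q => q h)
      (ψ := fun q => |q f| + |q g|) (by fun_prop) (by fun_prop) fun _ => rfl
    refine ⟨hZ.inter hW, h, by simp [hph, hf, hg], fun x hx => ?_⟩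
    have hx' : |f x| + |g x| = 0 := hx
    rw [add_eq_zero_iff_of_nonneg (abs_nonneg _) (abs_nonneg _), abs_eq_zero, abs_eq_zero] at hx'
    exact ⟨hfZ hx'.1, hgW hx'.2⟩
  · rintro Z ⟨-, f, hf, hfZ⟩ W hW hZW
    exact ⟨hW, f, hf, hfZ.trans hZW⟩

lemma isZUltrafilter_zFilterOf (hp : p ∈ closure (range (evalMap X))) :
    IsZUltrafilter (zFilterOf p) := by
  refine ⟨isZFilter_zFilterOf hp, fun G hG hFG => hFG.antisymm fun B hB => ?_⟩
  obtain ⟨⟨g, hg, rfl⟩, -⟩ := hG.2.1 B hB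
  refine ⟨⟨g, hg, rfl⟩, ⟨g, hg⟩, ?_, subset_rfl⟩
  by_contra hpg
  set c := |p ⟨g, hg⟩|
  have hc : 0 < c := abs_pos.2 hpg
  -- `k` vanishes on a set belonging to `zFilterOf p` yet equals `c / 2` on `g ⁻¹' {0}`.
  let k : C(X, ℝ) := ⟨fun x => max (c / 2 - |g x|) 0, by fun_prop⟩
  have hpk : p k = 0 := by
    rw [apply_eq_of_mem_closure_range hp (φ := fun q => q k)
      (ψ := fun q => max (c / 2 - |q ⟨g, hg⟩|) 0) (by fun_prop) (by fun_prop) fun _ => rfl]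
    exact max_eq_right (by linarith)
  have hkG : k ⁻¹' {0} ∈ G := hFG ⟨⟨k, k.continuous, rfl⟩, k, hpk, subset_rfl⟩
  obtain ⟨x, hxk, hxg⟩ := (hG.2.1 _ (hG.2.2.1 _ hkG _ hB)).2
  have hkx : max (c / 2 - |g x|) 0 = 0 := hxk
  simp only [mem_preimage, mem_singleton_iff] at hxg
  rw [hxg, abs_zero, sub_zero, max_eq_right_iff] at hkx
  linarith

lemma iInter_nonempty_of_mem_zFilterOf (hp : p ∈ closure (range (evalMap X)))
    {Z : ℕ → Set X} (hZ : ∀ n, Z n ∈ zFilterOf p) : (⋂ n, Z n).Nonempty := by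
  choose f hf hfZ using fun n => (hZ n).2
  let g : C(X, ℝ) := ⟨fun x => seqGauge fun n => f n x,
    continuous_seqGauge.comp (continuous_pi fun n => (f n).continuous)⟩
  have hpg : p g = 0 := by
    rw [apply_eq_of_mem_closure_range hp (φ := fun q => q g)
      (ψ := fun q => seqGauge fun n => q (f n)) (by fun_prop)
      (continuous_seqGauge.comp (by fun_prop)) fun _ => rfl, seqGauge_eq_zero_iff]
    exact hf
  obtain ⟨x, hx⟩ := nonempty_preimage_zero_of_mem_closure_range hp hpg
  exact ⟨x, mem_iInter.2 fun n => hfZ n (seqGauge_eq_zero_iff.1 hx n)⟩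

lemma evalMap_eq_of_mem_sInter_zFilterOf (hp : p ∈ closure (range (evalMap X))) {x : X}
    (hx : x ∈ ⋂₀ zFilterOf p) : evalMap X x = p := by
  funext f
  let h : C(X, ℝ) := ⟨fun y => f y - p f, by fun_prop⟩
  have hph : p h = 0 := by
    rw [apply_eq_of_mem_closure_range hp (φ := fun q => q h) (ψ := fun q => q f - p f)
      (by fun_prop) (by fun_prop) fun _ => rfl]
    exact sub_self _
  exact sub_eq_zero.1 (hx _ ⟨⟨h, h.continuous, rfl⟩, h, hph, subset_rfl⟩)

end ClosureOfRange

theorem isECompact_real_of_forall_sInter_nonempty {X : Type u} [TopologicalSpace X] [T0Space X]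
    [CompletelyRegularSpace X]
    (H : ∀ F : Set (Set X), IsZUltrafilter F → HasWeakCountableInterProp F → (⋂₀ F).Nonempty) :
    IsECompact ℝ X := by
  refine ⟨C(X, ℝ), ⟨0⟩, evalMap X, isEmbedding_evalMap,
    isClosed_of_closure_subset fun p hp => ?_⟩
  obtain ⟨x, hx⟩ := H _ (isZUltrafilter_zFilterOf hp)
    fun f hf => iInter_nonempty_of_mem_zFilterOf hp fun n => (hf n).2.2
  exact ⟨x, evalMap_eq_of_mem_sInter_zFilterOf hp hx⟩

/-- A Tychonoff space `X` is realcompact if and only if every z-ultrafilter `F` on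
`X` with the weak countable intersection property is fixed, where `F` has the weak
countable intersection property if for every sequence `(fₙ)` of bounded continuous
real-valued functions on `X` with `fₙ ⁻¹' {0} ∈ F` for all `n`, the intersection
`⋂ n, fₙ ⁻¹' {0}` is nonempty. -/
theorem stmt10 {X : Type u} [TopologicalSpace X] [T1Space X] [CompletelyRegularSpace X] :
    IsECompact ℝ X ↔
    ∀ F : Set (Set X), IsZUltrafilter F →
      (∀ f : ℕ → X → ℝ,
        (∀ n, Continuous (f n) ∧ (∃ M : ℝ, ∀ x : X, |f n x| ≤ M) ∧ (f n) ⁻¹' {0} ∈ F) →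
        (⋂ n, (f n) ⁻¹' {0}).Nonempty) →
      (⋂₀ F).Nonempty :=
  ⟨fun hX _ hF hcip => hF.sInter_nonempty_of_isECompact hX hcip,
    isECompact_real_of_forall_sInter_nonempty⟩
end

section
/- Let X be a zero-dimensional T1 space such that X = ⋃_{n∈ℕ} S_n where, for every n ∈ ℕ, the subspace S_n is ℕ-compact and c_δ-embedded in X (that is, for every A ∈ CO_δ(S_n) there exists B ∈ CO_δ(X) with A = B ∩ S_n). Then X is ℕ-compact. -/
/-!
Evaluation embeds `X` into `ℕ^C(X, ℕ)`, so it suffices that the image is closed. A point `p` of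
its closure singles out the clopen sets `f ⁻¹' {p f}`. Countably many of them always meet: else the
index of the first one missing a point is a continuous `g : X → ℕ`, and a point of `X` agreeing
with `p` at `g` and at the first `p g + 1` indices gives a contradiction. Since `X = ⋃ Sₙ`, they
then meet countably within a single `Sₙ`. There `c_δ`-embedding lets these sets decide every
coordinate of a closed embedding `Sₙ ↪ ℕ^J`, and closedness of the image yields a point of `Sₙ`
lying in all of them, i.e. a preimage of `p`.
-/

open Topology TopologicalSpace Set

universe u

/-- `A ∈ CO_δ(X)`: `A` is the intersection of a nonempty countable family of clopen
subsets of `X`. -/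
def MemCOdelta {X : Type*} [TopologicalSpace X] (A : Set X) : Prop :=
  ∃ 𝒞 : Set (Set X), 𝒞.Countable ∧ 𝒞.Nonempty ∧ (∀ C ∈ 𝒞, IsClopen C) ∧ A = ⋂₀ 𝒞

section Clopen

variable {X : Type*} [TopologicalSpace X]

theorem IsClopen.memCOdelta {A : Set X} (hA : IsClopen A) : MemCOdelta A :=
  ⟨{A}, countable_singleton A, singleton_nonempty A, by simpa using hA, (sInter_singleton A).symm⟩

theorem MemCOdelta.exists_iInter_eq {A : Set X} (hA : MemCOdelta A) :
    ∃ C : ℕ → Set X, (∀ n, IsClopen (C n)) ∧ A = ⋂ n, C n := by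
  obtain ⟨𝒞, h𝒞, hne, hclopen, rfl⟩ := hA
  obtain ⟨C, rfl⟩ := h𝒞.exists_eq_range hne
  exact ⟨C, fun n => hclopen _ (mem_range_self n), sInter_range C⟩

theorem IsClopen.exists_continuousMap_nat {C : Set X} (hC : IsClopen C) :
    ∃ f : C(X, ℕ), ∀ x y, f x = f y ↔ (x ∈ C ↔ y ∈ C) :=
  ⟨⟨fun x => (C.boolIndicator x).toNat,
      (continuous_of_discreteTopology (f := Bool.toNat)).comp
        ((continuous_boolIndicator_iff_isClopen C).2 hC)⟩,
    fun x y => by by_cases hx : x ∈ C <;> by_cases hy : y ∈ C <;> simp [Set.boolIndicator, hx, hy]⟩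

theorem isEmbedding_eval_of_isTopologicalBasis_isClopen [T0Space X]
    (hzd : IsTopologicalBasis {s : Set X | IsClopen s}) :
    IsEmbedding fun x (f : C(X, ℕ)) => f x := by
  refine IsInducing.isEmbedding (isInducing_iff_nhds.2 fun x => le_antisymm ?_ ?_)
  · exact ((continuous_pi fun f => f.continuous).tendsto x).le_comap
  · intro O hO
    obtain ⟨C, hC, hxC, hCO⟩ := hzd.mem_nhds_iff.1 hO
    obtain ⟨f, hf⟩ := IsClopen.exists_continuousMap_nat hC
    refine Filter.mem_comap.2 ⟨(fun z => z f) ⁻¹' {f x}, ?_, fun y hy => hCO ?_⟩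
    · exact ((isOpen_discrete ({f x} : Set ℕ)).preimage (continuous_apply f)).mem_nhds rfl
    · exact ((hf y x).1 hy).2 hxC

end Clopen

section Realization

variable {X : Type*} [TopologicalSpace X] {p : C(X, ℕ) → ℕ}

theorem exists_apply_eq_on_finite_of_mem_closure
    (hp : p ∈ closure (range fun x (f : C(X, ℕ)) => f x))
    {γ : Set C(X, ℕ)} (hγ : γ.Finite) : ∃ x, ∀ f ∈ γ, f x = p f := by
  obtain ⟨_, hz, x, rfl⟩ := mem_closure_iff.1 hp (γ.pi fun f => {p f})
    (isOpen_set_pi hγ fun _ _ => isOpen_discrete _) fun _ _ => rfl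
  exact ⟨x, hz⟩

theorem iInter_preimage_nonempty_of_mem_closure
    (hp : p ∈ closure (range fun x (f : C(X, ℕ)) => f x))
    {γ : Set C(X, ℕ)} (hγ : γ.Countable) : (⋂ f ∈ γ, f ⁻¹' {p f}).Nonempty := by
  obtain ⟨F, hF⟩ := countable_iff_exists_subset_range.1 hγ
  suffices ∃ x, ∀ i, F i x = p (F i) by
    obtain ⟨x, hx⟩ := this
    exact ⟨x, mem_iInter₂.2 fun f hf => by obtain ⟨i, rfl⟩ := hF hf; exact hx i⟩
  by_contra! h
  classical
  let g x := Nat.find (h x)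
  have hg : Continuous g := continuous_discrete_rng.2 fun m => by
    have : g ⁻¹' {m} = {x | F m x ≠ p (F m)} ∩ ⋂ k ∈ Finset.range m, (F k) ⁻¹' {p (F k)} := by
      ext x
      simp [g, Nat.find_eq_iff]
    rw [this]
    exact (isOpen_ne_fun (F m).continuous continuous_const).inter
      (isOpen_biInter_finset fun k _ => (isOpen_discrete _).preimage (F k).continuous)
  let G : C(X, ℕ) := ⟨g, hg⟩
  obtain ⟨x, hx⟩ :=
    exists_apply_eq_on_finite_of_mem_closure hp ((finite_Iic (p G)).image F |>.insert G)
  have hgx : g x = p G := hx G (mem_insert G _)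
  exact Nat.find_spec (h x) (hx _ (mem_insert_of_mem G ⟨g x, hgx.le, rfl⟩))

theorem exists_preimage_eq_or_compl (hp : p ∈ closure (range fun x (f : C(X, ℕ)) => f x))
    {C : Set X} (hC : IsClopen C) : ∃ f : C(X, ℕ), f ⁻¹' {p f} = C ∨ f ⁻¹' {p f} = Cᶜ := by
  obtain ⟨f, hf⟩ := hC.exists_continuousMap_nat
  obtain ⟨x, hx⟩ := exists_apply_eq_on_finite_of_mem_closure hp (finite_singleton f)
  refine ⟨f, ?_⟩
  rw [← hx f rfl]
  by_cases hxC : x ∈ C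
  · exact .inl (ext fun y => by simp [hf, hxC])
  · exact .inr (ext fun y => by simp [hf, hxC])

end Realization

theorem exists_forall_countable_inter_nonempty {X ι : Type*} (S : ℕ → Set X)
    (hcover : ⋃ n, S n = univ) (P : ι → Set X)
    (hP : ∀ s : Set ι, s.Countable → (⋂ i ∈ s, P i).Nonempty) :
    ∃ n, ∀ s : Set ι, s.Countable → (S n ∩ ⋂ i ∈ s, P i).Nonempty := by
  by_contra! h
  choose s hs hempty using h
  obtain ⟨x, hx⟩ := hP (⋃ n, s n) (countable_iUnion hs)
  obtain ⟨n, hxn⟩ := mem_iUnion.1 (hcover ▸ mem_univ x)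
  refine (hempty n).subset ⟨hxn, ?_⟩
  exact biInter_subset_biInter_left (subset_iUnion s n) hx

theorem IsECompact.exists_forall_mem {Y : Type u} [TopologicalSpace Y] (hY : IsECompact ℕ Y)
    {κ : Type*} (Q : κ → Set Y) (hQ : ∀ i, IsClosed (Q i))
    (hmeet : ∀ s : Set κ, s.Countable → (⋂ i ∈ s, Q i).Nonempty)
    (hdecide : ∀ g : C(Y, ℕ), ∃ k, ∃ s : Set κ, s.Countable ∧ ⋂ i ∈ s, Q i ⊆ g ⁻¹' {k}) :
    ∃ y, ∀ i, y ∈ Q i := by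
  obtain ⟨J, -, e, he, hclosed⟩ := hY
  choose q s hs hsub using
    fun j => hdecide ⟨fun y => e y j, (continuous_apply j).comp he.continuous⟩
  have approx : ∀ O ∈ 𝓝 q, ∀ t : Set κ, t.Countable → ∃ y ∈ ⋂ i ∈ t, Q i, e y ∈ O := by
    intro O hO t ht
    rw [nhds_pi, Filter.mem_pi] at hO
    obtain ⟨I, hI, u, hu, hIu⟩ := hO
    obtain ⟨y, hy⟩ := hmeet (t ∪ ⋃ j ∈ I, s j) (ht.union (hI.countable.biUnion fun j _ => hs j))
    refine ⟨y, biInter_subset_biInter_left subset_union_left hy, hIu fun j hj => ?_⟩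
    have hyj : e y j = q j := hsub j <|
      biInter_subset_biInter_left ((subset_biUnion_of_mem hj).trans subset_union_right) hy
    exact hyj ▸ mem_of_mem_nhds (hu j)
  obtain ⟨y, hy⟩ : q ∈ range e := hclosed.closure_subset <| mem_closure_iff_nhds.2 fun O hO =>
    let ⟨y, _, hyO⟩ := approx O hO ∅ countable_empty
    ⟨e y, hyO, y, rfl⟩
  refine ⟨y, fun i => (hQ i).closure_subset <| mem_closure_iff_nhds.2 fun W hW => ?_⟩
  rw [he.isInducing.nhds_eq_comap, hy] at hW
  obtain ⟨O, hO, hOW⟩ := Filter.mem_comap.1 hW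
  obtain ⟨z, hz, hzO⟩ := approx O hO {i} (countable_singleton i)
  exact ⟨z, hOW hzO, by simpa using hz⟩

section CDeltaEmbedded

variable {X : Type u} [TopologicalSpace X] {T : Set X}
  (hcδ : ∀ A : Set T, MemCOdelta A → ∃ B : Set X, MemCOdelta B ∧ A = Subtype.val ⁻¹' B)
  {ι : Type*} {P : ι → Set X} (hultra : ∀ C, IsClopen C → ∃ i, P i = C ∨ P i = Cᶜ)
  (hmeet : ∀ s : Set ι, s.Countable → (T ∩ ⋂ i ∈ s, P i).Nonempty)
include hcδ hultra hmeet

theorem exists_countable_iInter_subset_fiber (g : C(T, ℕ)) :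
    ∃ k, ∃ s : Set ι, s.Countable ∧ ⋂ i ∈ s, Subtype.val ⁻¹' P i ⊆ g ⁻¹' {k} := by
  have hfiber (k : ℕ) :
      ∃ C : ℕ → Set X, (∀ n, IsClopen (C n)) ∧ g ⁻¹' {k} = Subtype.val ⁻¹' ⋂ n, C n := by
    obtain ⟨B, hB, hgB⟩ := hcδ _ ((isClopen_discrete {k}).preimage g.continuous).memCOdelta
    obtain ⟨C, hC, rfl⟩ := hB.exists_iInter_eq
    exact ⟨C, hC, hgB⟩
  choose C hC hgC using hfiber
  by_contra! h
  -- Otherwise every fiber of `g` misses a member of `P`, and a point of `T` in all those members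
  -- lies in no fiber.
  have hcompl : ∀ k, ∃ n i, P i = (C k n)ᶜ := by
    intro k
    by_contra! hk
    choose i hi using fun n => (hultra _ (hC k n)).imp fun i hi => hi.resolve_right (hk n i)
    refine h k (range i) (countable_range i) ?_
    rw [hgC k, preimage_iInter]
    exact subset_iInter fun n t ht => by
      simpa [hi n] using mem_iInter₂.1 ht (i n) (mem_range_self n)
  choose n i hi using hcompl
  obtain ⟨x, hxT, hx⟩ := hmeet (range i) (countable_range i)
  have hxC : (⟨x, hxT⟩ : T) ∈ Subtype.val ⁻¹' ⋂ m, C (g ⟨x, hxT⟩) m := by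
    rw [← hgC]
    rfl
  have hxP : x ∈ P (i (g ⟨x, hxT⟩)) := mem_iInter₂.1 hx _ (mem_range_self _)
  rw [hi] at hxP
  exact hxP (mem_iInter.1 hxC _)

theorem exists_mem_forall_mem_of_isECompact (hT : IsECompact ℕ T) (hP : ∀ i, IsClosed (P i)) :
    ∃ x ∈ T, ∀ i, x ∈ P i := by
  obtain ⟨y, hy⟩ := hT.exists_forall_mem (fun i => Subtype.val ⁻¹' P i)
    (fun i => (hP i).preimage continuous_subtype_val)
    (fun s hs => let ⟨x, hxT, hx⟩ := hmeet s hs; ⟨⟨x, hxT⟩, by simpa using hx⟩)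
    (exists_countable_iInter_subset_fiber hcδ hultra hmeet)
  exact ⟨y, y.2, hy⟩

end CDeltaEmbedded

/-- Let `X` be a zero-dimensional `T₁` space which is a countable union of
subspaces `Sₙ`, each `ℕ`-compact and `c_δ`-embedded in `X` (every member of
`CO_δ(Sₙ)` is the trace on `Sₙ` of a member of `CO_δ(X)`).  Then `X` is
`ℕ`-compact. -/
theorem stmt12 {X : Type u} [TopologicalSpace X] [T1Space X]
    (hzd : IsTopologicalBasis {s : Set X | IsClopen s})
    (S : ℕ → Set X) (hcover : ⋃ n, S n = Set.univ)
    (hn : ∀ n, IsECompact ℕ ↥(S n))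
    (hc : ∀ n, ∀ A : Set ↥(S n), MemCOdelta A →
      ∃ B : Set X, MemCOdelta B ∧ A = Subtype.val ⁻¹' B) :
    IsECompact ℕ X := by
  refine ⟨C(X, ℕ), inferInstance, _, isEmbedding_eval_of_isTopologicalBasis_isClopen hzd,
    isClosed_of_closure_subset fun p hp => ?_⟩
  obtain ⟨n, hmeet⟩ := exists_forall_countable_inter_nonempty S hcover
    (fun f : C(X, ℕ) => f ⁻¹' {p f}) fun _ => iInter_preimage_nonempty_of_mem_closure hp
  obtain ⟨x, -, hx⟩ := exists_mem_forall_mem_of_isECompact (hc n)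
    (fun _ hC => exists_preimage_eq_or_compl hp hC) hmeet (hn n)
    fun f => (isClosed_discrete _).preimage f.continuous
  exact ⟨x, funext hx⟩
end

section
/- Let X be a T1 space with X = S ∪ K where the set K is compact in X. (i) If X is completely regular and the subspace S of X is realcompact, then X is realcompact. (ii) If X is zero-dimensional and the subspace S of X is ℕ-compact, then X is ℕ-compact. -/
open Topology TopologicalSpace Set

universe u

/-!
Evaluation embeds `X` into `E ^ C(X, E)`, and its range is closed as soon as every nontrivial
filter `F` along which all `f : C(X, E)` converge has a cluster point. If `F` clusters nowhere on
the compact set `K`, finitely many functions vanishing along `F` combine into a `g > c` on `K`,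
and `φ ∘ g` is a cutoff equal to `1` along `F` and vanishing near `K`, hence supported inside
`S`. Multiplying the coordinates of a closed embedding `S → E ^ J` by this cutoff gives functions
on `X`; they converge along `F`, so the embedding converges along the trace of `F` on `S`, and
closedness of its range produces a cluster point of `F` in `S`.
-/

open Filter Function

def IsECompletelyRegular (E X : Type*) [TopologicalSpace E] [Zero E] [One E]
    [TopologicalSpace X] : Prop :=
  ∀ x U, IsOpen U → x ∈ U → ∃ g : C(X, E), g x = 1 ∧ EqOn g 0 Uᶜ

section

variable {X : Type*} [TopologicalSpace X]

theorem CompletelyRegularSpace.isECompletelyRegular_real [CompletelyRegularSpace X] :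
    IsECompletelyRegular ℝ X := by
  intro x U hU hx
  obtain ⟨f, hf, hfx, hfU⟩ := CompletelyRegularSpace.completely_regular_isOpen x U hU hx
  refine ⟨⟨fun y => 1 - f y, by fun_prop⟩, by simp [hfx], fun y hy => ?_⟩
  simp [hfU hy]

theorem isECompletelyRegular_nat_of_isTopologicalBasis_clopens
    (hX : IsTopologicalBasis {s : Set X | IsClopen s}) : IsECompletelyRegular ℕ X := by
  intro x U hU hx
  obtain ⟨V, hV, hxV, hVU⟩ := hX.exists_subset_of_mem_open hx hU
  refine ⟨⟨V.indicator 1, hV.continuous_indicator continuous_const⟩, by simp [hxV],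
    fun y hy => ?_⟩
  simp [indicator_of_notMem (fun hyV => hy (hVU hyV))]

end

namespace IsECompletelyRegular

variable {E X : Type*} [TopologicalSpace E] [TopologicalSpace X]

theorem isEmbedding_eval [Zero E] [One E] [NeZero (1 : E)] [T2Space E] [T1Space X]
    (hX : IsECompletelyRegular E X) : IsEmbedding fun x (f : C(X, E)) => f x := by
  refine IsEmbedding.mk' _ (fun x y hxy => by_contra fun hne => ?_) fun x => ?_
  · obtain ⟨g, hgx, hgy⟩ := hX x {y}ᶜ isOpen_compl_singleton hne
    exact one_ne_zero (hgx.symm.trans ((congr_fun hxy g).trans (hgy (by simp))))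
  · refine le_antisymm ((nhds_basis_opens x).ge_iff.mpr fun U ⟨hx, hU⟩ => ?_)
      ((continuous_pi fun f => f.continuous).tendsto x).le_comap
    obtain ⟨g, hgx, hgU⟩ := hX x U hU hx
    refine mem_comap.mpr ⟨{p | p g ≠ 0}, (isOpen_ne_fun (continuous_apply g)
      continuous_const).mem_nhds (by simp [hgx]), fun y hy => by_contra fun hyU => hy (hgU hyU)⟩

theorem exists_eventuallyEq_zero_of_not_clusterPt [Zero E] [One E]
    (hX : IsECompletelyRegular E X) {F : Filter X} {x : X} (hx : ¬ClusterPt x F) :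
    ∃ g : C(X, E), g x = 1 ∧ g =ᶠ[F] 0 := by
  rw [clusterPt_iff_not_disjoint, not_not, (nhds_basis_opens x).disjoint_iff_left] at hx
  obtain ⟨U, ⟨hxU, hU⟩, hUF⟩ := hx
  obtain ⟨g, hgx, hgU⟩ := hX x U hU hxU
  exact ⟨g, hgx, mem_of_superset hUF hgU⟩

end IsECompletelyRegular

theorem IsCompact.exists_continuousMap_gt_eventuallyEq_zero {X E : Type*} [TopologicalSpace X]
    [TopologicalSpace E] [LinearOrder E] [OrderClosedTopology E] [Zero E] {K : Set X}
    (hK : IsCompact K) {F : Filter X} {c : E}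
    (hloc : ∀ x ∈ K, ∃ g : C(X, E), c < g x ∧ g =ᶠ[F] 0) :
    ∃ g : C(X, E), (∀ x ∈ K, c < g x) ∧ g =ᶠ[F] 0 := by
  refine hK.induction_on (p := fun A => ∃ g : C(X, E), (∀ x ∈ A, c < g x) ∧ g =ᶠ[F] 0)
    ⟨0, by simp, EventuallyEq.rfl⟩
    (fun A B hAB ⟨g, hg, hgF⟩ => ⟨g, fun x hx => hg x (hAB hx), hgF⟩)
    (fun A B ⟨g, hg, hgF⟩ ⟨g', hg', hg'F⟩ => ⟨g ⊔ g', ?_, ?_⟩) fun x hx => ?_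
  · rintro x (hx | hx)
    · exact (hg x hx).trans_le le_sup_left
    · exact (hg' x hx).trans_le le_sup_right
  · filter_upwards [hgF, hg'F] with x hx hx'
    simp [hx, hx']
  · obtain ⟨g, hgx, hgF⟩ := hloc x hx
    refine ⟨{y | c < g y}, mem_nhdsWithin_of_mem_nhds ?_, g, fun y hy => hy, hgF⟩
    exact (isOpen_lt continuous_const g.continuous).mem_nhds hgx

theorem isClosed_range_eval_of_forall_clusterPt {X E : Type*} [TopologicalSpace X]
    [TopologicalSpace E] [T2Space E]
    (h : ∀ F : Filter X, F.NeBot → (∀ f : C(X, E), ∃ c, Tendsto f F (𝓝 c)) →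
      ∃ x, ClusterPt x F) :
    IsClosed (range fun x (f : C(X, E)) => f x) := by
  set e : X → C(X, E) → E := fun x f => f x
  refine closure_subset_iff_isClosed.mp fun p hp => ?_
  have hF : (comap e (𝓝 p)).NeBot :=
    comap_neBot_iff_frequently.mpr (mem_closure_iff_frequently.mp hp)
  have he : Tendsto e (comap e (𝓝 p)) (𝓝 p) := tendsto_comap
  obtain ⟨x, hx⟩ := h _ hF fun f => ⟨p f, (continuous_apply f).continuousAt.tendsto.comp he⟩
  exact ⟨x, eq_of_nhds_neBot (hx.map (continuous_pi fun f => f.continuous).continuousAt he)⟩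

open scoped Classical in
theorem continuous_dite_mul_of_tsupport_subset {X E : Type*} [TopologicalSpace X]
    [TopologicalSpace E] [MulZeroClass E] [ContinuousMul E] {S : Set X} {g : S → E}
    (hg : Continuous g) {t : X → E} (ht : Continuous t) (hts : tsupport t ⊆ interior S) :
    Continuous fun x => if hx : x ∈ S then g ⟨x, hx⟩ * t x else 0 := by
  refine ContinuousOn.continuous_of_tsupport_subset ?_ isOpen_interior
    ((closure_mono fun x hx => ?_).trans hts)
  · refine (continuousOn_iff_continuous_domRestrict.mpr ?_).mono interior_subset
    have : S.domRestrict (fun x => if hx : x ∈ S then g ⟨x, hx⟩ * t x else 0) =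
        fun y => g y * t y := funext fun y => dif_pos y.2
    rw [this]
    exact hg.mul (ht.comp continuous_subtype_val)
  · contrapose! hx
    simp [notMem_support.mp hx]

open scoped Classical in
theorem exists_clusterPt_of_isClosedEmbedding {X E J : Type*} [TopologicalSpace X]
    [TopologicalSpace E] [MulZeroOneClass E] [ContinuousMul E] [NeZero (1 : E)] {S : Set X}
    {h : S → J → E} (hh : IsClosedEmbedding h) {F : Filter X} [F.NeBot]
    (hF : ∀ f : C(X, E), ∃ c, Tendsto f F (𝓝 c)) {t : C(X, E)} (hts : tsupport t ⊆ interior S)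
    (ht : t =ᶠ[F] 1) : ∃ x, ClusterPt x F := by
  have hSF : S ∈ F := mem_of_superset ht fun x hx =>
    interior_subset (hts (subset_tsupport _ (mem_support.mpr (hx ▸ one_ne_zero))))
  set G := comap ((↑) : S → X) F
  have : G.NeBot := NeBot.comap_of_range_mem ‹_› (by rwa [Subtype.range_coe])
  choose c hc using fun j => hF ⟨_, continuous_dite_mul_of_tsupport_subset
    ((continuous_apply j).comp hh.continuous) t.continuous hts⟩
  have hG : Tendsto h G (𝓝 c) := tendsto_pi_nhds.mpr fun j =>
    ((hc j).comp tendsto_comap).congr' <| (tendsto_comap.eventually ht).mono fun s hs => by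
      simp_all
  obtain ⟨s, -, hs⟩ := hh.isProperMap.clusterPt_of_mapClusterPt (ClusterPt.of_le_nhds hG)
  exact ⟨s, hs.map continuous_subtype_val.continuousAt tendsto_comap⟩

/-- Taking the interior, rather than `Iic c` itself, makes `φ ∘ g` vanish on a neighbourhood of
the closure of `{x | c < g x}`, hence of `closure K` when `c < g` on `K`. -/
def HasZeroCutoff (E : Type*) [TopologicalSpace E] [Preorder E] [Zero E] [One E] : Prop :=
  ∃ c < (1 : E), ∃ φ : C(E, E), φ 0 = 1 ∧ tsupport φ ⊆ interior (Iic c)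

theorem Real.hasZeroCutoff : HasZeroCutoff ℝ := by
  refine ⟨1 / 2, by norm_num, ⟨fun y => max 0 (1 - 4 * y), by fun_prop⟩, by simp, ?_⟩
  rw [interior_Iic]
  refine (closure_minimal (fun y hy => ?_) isClosed_Iic).trans
    (Iic_subset_Iio.mpr (by norm_num : (1 / 4 : ℝ) < 1 / 2))
  contrapose! hy
  rw [mem_Iic, not_le] at hy
  exact notMem_support.mpr (max_eq_left (by linarith))

theorem Nat.hasZeroCutoff : HasZeroCutoff ℕ := by
  refine ⟨0, one_pos, ⟨({0} : Set ℕ).indicator 1, continuous_of_discreteTopology⟩, by simp, ?_⟩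
  rw [(isOpen_discrete _).interior_eq]
  exact closure_minimal (fun y hy => by simp_all) (isClosed_discrete _)

theorem isECompact_of_union_of_isCompact {E : Type} [TopologicalSpace E] [LinearOrder E]
    [OrderClosedTopology E] [MulZeroOneClass E] [ContinuousMul E] [NeZero (1 : E)]
    (hE : HasZeroCutoff E) {X : Type u} [TopologicalSpace X] [T1Space X]
    (hX : IsECompletelyRegular E X) {S K : Set X} (hUnion : S ∪ K = univ) (hK : IsCompact K)
    (hS : IsECompact E S) : IsECompact E X := by
  obtain ⟨c, hc1, φ, hφ0, hφc⟩ := hE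
  obtain ⟨J, -, h, hh, hrange⟩ := hS
  refine ⟨C(X, E), ⟨0⟩, _, hX.isEmbedding_eval,
    isClosed_range_eval_of_forall_clusterPt fun F hF hconv => ?_⟩
  by_contra! hnot
  obtain ⟨g, hgK, hgF⟩ := hK.exists_continuousMap_gt_eventuallyEq_zero fun x _ =>
    (hX.exists_eventuallyEq_zero_of_not_clusterPt (hnot x)).imp fun g hg => ⟨hg.1 ▸ hc1, hg.2⟩
  have hS_of_le : ∀ x, g x ≤ c → x ∈ S := fun x hx =>
    (hUnion.ge (mem_univ x)).resolve_right fun hxK => (hgK x hxK).not_ge hx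
  have hts : tsupport (φ.comp g) ⊆ interior S := calc
    tsupport (φ ∘ g) ⊆ g ⁻¹' interior (Iic c) :=
      (tsupport_comp_subset_preimage φ g.continuous).trans (preimage_mono hφc)
    _ ⊆ interior S := interior_maximal (fun x hx => hS_of_le x (interior_subset (s := Iic c) hx))
      (isOpen_interior.preimage g.continuous)
  obtain ⟨x, hx⟩ := exists_clusterPt_of_isClosedEmbedding ⟨hh, hrange⟩ hconv hts
    (hgF.mono fun x hx => by simp [hx, hφ0])
  exact hnot x hx

/-- Let `X` be a `T₁` space with `X = S ∪ K`, where `K` is compact in `X`.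
(i) If `X` is completely regular and the subspace `S` is realcompact, then `X` is
realcompact.  (ii) If `X` is zero-dimensional and the subspace `S` is `ℕ`-compact,
then `X` is `ℕ`-compact. -/
theorem stmt13 {X : Type u} [TopologicalSpace X] [T1Space X]
    (S K : Set X) (hUnion : S ∪ K = Set.univ) (hK : IsCompact K) :
    (CompletelyRegularSpace X → IsECompact ℝ ↥S → IsECompact ℝ X) ∧
    (IsTopologicalBasis {s : Set X | IsClopen s} → IsECompact ℕ ↥S → IsECompact ℕ X) :=
  ⟨fun _ hS => isECompact_of_union_of_isCompact Real.hasZeroCutoff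
      CompletelyRegularSpace.isECompletelyRegular_real hUnion hK hS,
    fun hX hS => isECompact_of_union_of_isCompact Nat.hasZeroCutoff
      (isECompletelyRegular_nat_of_isTopologicalBasis_clopens hX) hUnion hK hS⟩
end

section
/- Let X be a nonempty zero-dimensional T1 space. Then X is ℕ-compact if and only if every countably additive 2-valued c-measure on X is a Dirac c-measure. Here a c-measure on X is a function μ from the clopen subsets of X to [0, ∞) with μ(A ∪ B) = μ(A) + μ(B) whenever A and B are disjoint clopen sets; μ is 2-valued if it takes only the values 0 and 1 and μ(X) = 1; μ is countably additive if μ(⋃_{n∈ℕ} A_n) = Σ_{n∈ℕ} μ(A_n) whenever (A_n)_{n∈ℕ} is a pairwise disjoint sequence of clopen sets whose union is clopen; and μ is the Dirac c-measure determined by a point p ∈ X if for every clopen A ⊆ X one has μ(A) = 1 when p ∈ A and μ(A) = 0 when p ∉ A. -/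
open Topology TopologicalSpace Set

universe u

/-!
The clopen sets of measure one of a 2-valued c-measure `μ` form an ultrafilter of clopen sets,
and countable additivity says that every continuous `g : X → ℕ` has a fibre of measure one.

If `e : X → ℕ^J` is a closed embedding, collecting these fibre indices for the coordinates of `e`
gives a point `q` of `ℕ^J` every neighbourhood of which meets `e '' B` for each clopen `B` of
measure one; as `e '' B` is closed, `q = e p` with `p ∈ B`, and `μ` is the Dirac c-measure at `p`.

Conversely, embed `X` into `ℕ^C(X, ℕ)` by evaluation (injective and inducing because the clopen
sets form a base). A point `f` of the closure of the image respects every identity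
`g' = φ ∘ g` with `φ : ℕ → ℕ`, so `μ (g ⁻¹' S) := [f g ∈ S]` is a well-defined countably additive
2-valued c-measure. It is Dirac at some `p`, and then `f g = g p` for all `g`, i.e. `f` lies in
the image.
-/

variable {X : Type*} [TopologicalSpace X]

structure IsTwoValuedCMeasure (μ : Set X → ℝ) : Prop where
  union_eq : ∀ A B : Set X, IsClopen A → IsClopen B → Disjoint A B → μ (A ∪ B) = μ A + μ B
  eq_zero_or_eq_one : ∀ A : Set X, IsClopen A → μ A = 0 ∨ μ A = 1
  univ_eq : μ univ = 1

def IsCountablyAdditiveOnClopens (μ : Set X → ℝ) : Prop :=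
  ∀ A : ℕ → Set X, (∀ n, IsClopen (A n)) → (∀ m n, m ≠ n → Disjoint (A m) (A n)) →
    IsClopen (⋃ n, A n) → HasSum (fun n => μ (A n)) (μ (⋃ n, A n))

def IsDiracAt (μ : Set X → ℝ) (p : X) : Prop :=
  ∀ A : Set X, IsClopen A → (p ∈ A → μ A = 1) ∧ (p ∉ A → μ A = 0)

namespace IsTwoValuedCMeasure

variable {μ : Set X → ℝ}

theorem empty_eq (hμ : IsTwoValuedCMeasure μ) : μ ∅ = 0 := by
  have h := hμ.union_eq ∅ ∅ isClopen_empty isClopen_empty (disjoint_empty _)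
  rw [union_empty] at h
  linarith

theorem compl_eq (hμ : IsTwoValuedCMeasure μ) {A : Set X} (hA : IsClopen A) :
    μ Aᶜ = 1 - μ A := by
  have h := hμ.union_eq A Aᶜ hA hA.compl disjoint_compl_right
  rw [union_compl_self, hμ.univ_eq] at h
  linarith

theorem nonempty_of_eq_one (hμ : IsTwoValuedCMeasure μ) {A : Set X} (h : μ A = 1) :
    A.Nonempty := by
  rw [nonempty_iff_ne_empty]
  rintro rfl
  rw [hμ.empty_eq] at h
  exact zero_ne_one h

theorem inter_eq_one (hμ : IsTwoValuedCMeasure μ) {A B : Set X} (hA : IsClopen A)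
    (hB : IsClopen B) (hA1 : μ A = 1) (hB1 : μ B = 1) : μ (A ∩ B) = 1 := by
  have hsplit := hμ.union_eq _ _ (hA.inter hB) (hA.diff hB)
    (disjoint_sdiff_right.mono_left inter_subset_right)
  have hcover := hμ.union_eq _ _ (hA.diff hB) hB disjoint_sdiff_left
  rw [inter_union_sdiff] at hsplit
  rcases hμ.eq_zero_or_eq_one _ ((hA.diff hB).union hB) with h | h <;>
    rcases hμ.eq_zero_or_eq_one _ (hA.diff hB) with h' | h' <;> linarith

theorem biInter_eq_one (hμ : IsTwoValuedCMeasure μ) {ι : Type*} (s : Finset ι)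
    {A : ι → Set X} (hA : ∀ i, IsClopen (A i)) (h1 : ∀ i ∈ s, μ (A i) = 1) :
    μ (⋂ i ∈ s, A i) = 1 := by
  classical
  induction s using Finset.induction_on with
  | empty => simpa using hμ.univ_eq
  | insert a s _ ih =>
    rw [Finset.set_biInter_insert]
    exact hμ.inter_eq_one (hA a) (isClopen_biInter_finset fun i _ => hA i)
      (h1 a (Finset.mem_insert_self a s)) (ih fun i hi => h1 i (Finset.mem_insert_of_mem hi))

theorem isDiracAt_of_forall_mem (hμ : IsTwoValuedCMeasure μ) {p : X}
    (h : ∀ A, IsClopen A → μ A = 1 → p ∈ A) : IsDiracAt μ p := by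
  refine fun A hA => ⟨fun hpA => ?_, fun hpA => ?_⟩
  · refine (hμ.eq_zero_or_eq_one A hA).resolve_left fun h0 => ?_
    exact h Aᶜ hA.compl (by rw [hμ.compl_eq hA, h0, sub_zero]) hpA
  · exact (hμ.eq_zero_or_eq_one A hA).resolve_right fun h1 => hpA (h A hA h1)

theorem exists_preimage_singleton_eq_one (hμ : IsTwoValuedCMeasure μ)
    (hc : IsCountablyAdditiveOnClopens μ) {g : X → ℕ} (hg : Continuous g) :
    ∃ n, μ (g ⁻¹' {n}) = 1 := by
  have hfib : ∀ n, IsClopen (g ⁻¹' {n}) := fun n => (isClopen_discrete _).preimage hg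
  have hcover : (⋃ n, g ⁻¹' {n}) = univ := by
    rw [← preimage_iUnion, iUnion_singleton_eq_range, range_id', preimage_univ]
  have hsum := hc _ hfib (fun m n hmn => (disjoint_singleton.2 hmn).preimage g)
    (hcover ▸ isClopen_univ)
  rw [hcover, hμ.univ_eq] at hsum
  by_contra! hne
  have hzero : ∀ n, μ (g ⁻¹' {n}) = 0 := fun n =>
    (hμ.eq_zero_or_eq_one _ (hfib n)).resolve_right (hne n)
  simp only [hzero] at hsum
  exact zero_ne_one (hasSum_zero.unique hsum)

end IsTwoValuedCMeasure

theorem exists_isDiracAt_of_isClosedEmbedding {J : Type*} {e : X → J → ℕ}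
    (he : IsClosedEmbedding e) {μ : Set X → ℝ} (hμ : IsTwoValuedCMeasure μ)
    (hc : IsCountablyAdditiveOnClopens μ) : ∃ p, IsDiracAt μ p := by
  have hcoord : ∀ j, Continuous fun x => e x j := fun j =>
    (continuous_apply j).comp he.continuous
  choose q hq using fun j => hμ.exists_preimage_singleton_eq_one hc (hcoord j)
  have hfib : ∀ j, IsClopen ((fun x => e x j) ⁻¹' {q j}) := fun j =>
    (isClopen_discrete _).preimage (hcoord j)
  have hmem : ∀ B, IsClopen B → μ B = 1 → q ∈ e '' B := by
    intro B hB hB1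
    rw [← (he.isClosedMap B hB.isClosed).closure_eq, mem_closure_iff]
    intro o ho hqo
    obtain ⟨I, u, hu, hIo⟩ := isOpen_pi_iff.1 ho q hqo
    obtain ⟨x, hxB, hxI⟩ := hμ.nonempty_of_eq_one <| hμ.inter_eq_one hB
      (isClopen_biInter_finset fun j _ => hfib j) hB1 (hμ.biInter_eq_one I hfib fun j _ => hq j)
    refine ⟨e x, hIo fun j hj => ?_, x, hxB, rfl⟩
    have hxj : e x j = q j := mem_iInter₂.1 hxI j hj
    exact hxj ▸ (hu j hj).2
  obtain ⟨p, -, hp⟩ := hmem univ isClopen_univ hμ.univ_eq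
  refine ⟨p, hμ.isDiracAt_of_forall_mem fun B hB hB1 => ?_⟩
  obtain ⟨x, hxB, hx⟩ := hmem B hB hB1
  rwa [he.injective (hx.trans hp.symm)] at hxB

theorem IsClopen.exists_continuousMap_nat_preimage_one {A : Set X} (hA : IsClopen A) :
    ∃ g : C(X, ℕ), g ⁻¹' {1} = A :=
  ⟨⟨A.indicator 1, hA.continuous_indicator continuous_const⟩, by
    ext x; by_cases hx : x ∈ A <;> simp [hx]⟩

theorem exists_continuousMap_nat_preimage_one_two {A B : Set X} (hA : IsClopen A)
    (hB : IsClopen B) (hAB : Disjoint A B) : ∃ g : C(X, ℕ), g ⁻¹' {1} = A ∧ g ⁻¹' {2} = B := by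
  refine ⟨⟨A.indicator 1 + B.indicator 2, (hA.continuous_indicator continuous_const).add
    (hB.continuous_indicator continuous_const)⟩, ?_, ?_⟩ <;>
  · ext x
    by_cases hxA : x ∈ A <;> by_cases hxB : x ∈ B <;> simp [hxA, hxB]
    exact hAB.ne_of_mem hxA hxB rfl

theorem exists_continuousMap_nat_preimage_succ {A : ℕ → Set X} (hA : ∀ n, IsClopen (A n))
    (hdisj : ∀ m n, m ≠ n → Disjoint (A m) (A n)) (hU : IsClopen (⋃ n, A n)) :
    ∃ g : C(X, ℕ), g ⁻¹' {0} = (⋃ n, A n)ᶜ ∧ ∀ n, g ⁻¹' {n + 1} = A n := by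
  classical
  let g : X → ℕ := fun x => if h : ∃ n, x ∈ A n then Nat.find h + 1 else 0
  have hg0 : g ⁻¹' {0} = (⋃ n, A n)ᶜ := by
    ext x
    simp [g]
  have hgsucc : ∀ n, g ⁻¹' {n + 1} = A n := by
    intro n
    ext x
    simp only [mem_preimage, mem_singleton_iff, g]
    split_ifs with h
    · rw [add_left_inj, Nat.find_eq_iff]
      refine ⟨fun ⟨hx, _⟩ => hx, fun hx => ⟨hx, fun m _ hm => ?_⟩⟩
      exact (hdisj m n (by omega)).ne_of_mem hm hx rfl
    · exact iff_of_false not_false fun hx => h ⟨n, hx⟩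
  refine ⟨⟨g, continuous_discrete_rng.2 ?_⟩, hg0, hgsucc⟩
  rintro (_ | n)
  · exact hg0 ▸ hU.compl.isOpen
  · exact hgsucc n ▸ (hA n).isOpen

def natEval (x : X) (g : C(X, ℕ)) : ℕ := g x

theorem isInducing_natEval (hzd : IsTopologicalBasis {s : Set X | IsClopen s}) :
    IsInducing (natEval : X → C(X, ℕ) → ℕ) := by
  have htop : ‹TopologicalSpace X› = ⨅ g : C(X, ℕ), induced g inferInstance := by
    refine le_antisymm (le_iInf fun g => continuous_iff_le_induced.1 g.continuous) ?_
    calc ⨅ g : C(X, ℕ), induced g inferInstance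
        ≤ generateFrom {s : Set X | IsClopen s} := le_generateFrom fun A hA => by
          obtain ⟨g, hg⟩ := IsClopen.exists_continuousMap_nat_preimage_one hA
          exact iInf_le (fun g : C(X, ℕ) => induced g inferInstance) g A
            (isOpen_induced_iff.2 ⟨{1}, isOpen_discrete _, hg⟩)
      _ = _ := hzd.eq_generateFrom.symm
  convert inducing_iInf_to_pi fun (g : C(X, ℕ)) (x : X) => g x
  rfl

theorem isEmbedding_natEval [T0Space X] (hzd : IsTopologicalBasis {s : Set X | IsClopen s}) :
    IsEmbedding (natEval : X → C(X, ℕ) → ℕ) :=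
  (isInducing_natEval hzd).isEmbedding

open Classical in
noncomputable def evalMeasure (f : C(X, ℕ) → ℕ) (A : Set X) : ℝ :=
  if ∃ g : C(X, ℕ), ∃ S : Set ℕ, g ⁻¹' S = A ∧ f g ∈ S then 1 else 0

section ClosureOfRange

variable {f : C(X, ℕ) → ℕ}

theorem apply_comp_of_mem_closure_range_natEval (hf : f ∈ closure (range natEval))
    (φ : ℕ → ℕ) (g : C(X, ℕ)) :
    f ((⟨φ, continuous_of_discreteTopology⟩ : C(ℕ, ℕ)).comp g) = φ (f g) := by
  have hclosed : IsClosed {h : C(X, ℕ) → ℕ |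
      h ((⟨φ, continuous_of_discreteTopology⟩ : C(ℕ, ℕ)).comp g) = φ (h g)} :=
    isClosed_eq (continuous_apply _) (continuous_of_discreteTopology.comp (continuous_apply g))
  exact hclosed.closure_subset_iff.2 (range_subset_iff.2 fun x => rfl) hf

theorem mem_iff_mem_of_mem_closure_range_natEval (hf : f ∈ closure (range natEval))
    {g g' : C(X, ℕ)} {S S' : Set ℕ} (h : g ⁻¹' S = g' ⁻¹' S') : f g ∈ S ↔ f g' ∈ S' := by
  have hcomp : (⟨S.indicator 1, continuous_of_discreteTopology⟩ : C(ℕ, ℕ)).comp g =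
      (⟨S'.indicator 1, continuous_of_discreteTopology⟩ : C(ℕ, ℕ)).comp g' := by
    ext x
    have hx : g x ∈ S ↔ g' x ∈ S' := Set.ext_iff.1 h x
    by_cases hgx : g x ∈ S
    · simp [hgx, hx.1 hgx]
    · simp [hgx, mt hx.2 hgx]
  have := congrArg f hcomp
  rw [apply_comp_of_mem_closure_range_natEval hf, apply_comp_of_mem_closure_range_natEval hf]
    at this
  by_cases hS : f g ∈ S <;> by_cases hS' : f g' ∈ S' <;> simp_all

theorem evalMeasure_preimage (hf : f ∈ closure (range natEval)) (g : C(X, ℕ)) (S : Set ℕ) :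
    evalMeasure f (g ⁻¹' S) = S.indicator 1 (f g) := by
  by_cases hS : f g ∈ S
  · rw [indicator_of_mem hS, evalMeasure, if_pos ⟨g, S, rfl, hS⟩, Pi.one_apply]
  · rw [indicator_of_notMem hS, evalMeasure, if_neg]
    rintro ⟨g', S', h, hS'⟩
    exact hS ((mem_iff_mem_of_mem_closure_range_natEval hf h).1 hS')

theorem isTwoValuedCMeasure_evalMeasure (hf : f ∈ closure (range natEval)) :
    IsTwoValuedCMeasure (evalMeasure f) where
  union_eq A B hA hB hAB := by
    obtain ⟨g, rfl, rfl⟩ := exists_continuousMap_nat_preimage_one_two hA hB hAB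
    rw [← preimage_union, evalMeasure_preimage hf, evalMeasure_preimage hf,
      evalMeasure_preimage hf, indicator_union_of_disjoint (by simp)]
  eq_zero_or_eq_one A _ := by
    unfold evalMeasure
    split_ifs <;> simp
  univ_eq := by
    simpa using evalMeasure_preimage hf (ContinuousMap.const X 0) univ

theorem isCountablyAdditiveOnClopens_evalMeasure (hf : f ∈ closure (range natEval)) :
    IsCountablyAdditiveOnClopens (evalMeasure f) := by
  intro A hA hdisj hU
  obtain ⟨g, hg0, hgA⟩ := exists_continuousMap_nat_preimage_succ hA hdisj hU
  have hunion : ⋃ n, A n = g ⁻¹' {0}ᶜ := by rw [preimage_compl, hg0, compl_compl]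
  rw [hunion]
  simp only [← hgA, evalMeasure_preimage hf]
  rcases f g with _ | m
  · simp
  · simpa [indicator_apply, eq_comm] using hasSum_ite_eq m (1 : ℝ)

end ClosureOfRange

theorem isClosed_range_natEval
    (H : ∀ μ : Set X → ℝ, IsTwoValuedCMeasure μ → IsCountablyAdditiveOnClopens μ →
      ∃ p, IsDiracAt μ p) :
    IsClosed (range (natEval : X → C(X, ℕ) → ℕ)) := by
  refine isClosed_of_closure_subset fun f hf => ?_
  obtain ⟨p, hp⟩ := H _ (isTwoValuedCMeasure_evalMeasure hf)
    (isCountablyAdditiveOnClopens_evalMeasure hf)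
  refine ⟨p, funext fun g => ?_⟩
  have hfib := (hp _ ((isClopen_discrete {g p}).preimage g.continuous)).1 rfl
  rw [evalMeasure_preimage hf] at hfib
  simpa [natEval, indicator_apply, eq_comm] using hfib

theorem stmt16_general {X : Type u} [TopologicalSpace X] [T1Space X]
    (hzd : IsTopologicalBasis {s : Set X | IsClopen s}) :
    IsECompact ℕ X ↔
    ∀ μ : Set X → ℝ,
      (∀ A B : Set X, IsClopen A → IsClopen B → Disjoint A B →
        μ (A ∪ B) = μ A + μ B) →
      (∀ A : Set X, IsClopen A → μ A = 0 ∨ μ A = 1) →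
      μ Set.univ = 1 →
      (∀ A : ℕ → Set X, (∀ n, IsClopen (A n)) →
        (∀ m n, m ≠ n → Disjoint (A m) (A n)) → IsClopen (⋃ n, A n) →
        HasSum (fun n => μ (A n)) (μ (⋃ n, A n))) →
      ∃ p : X, ∀ A : Set X, IsClopen A →
        (p ∈ A → μ A = 1) ∧ (p ∉ A → μ A = 0) := by
  refine ⟨fun ⟨J, _, e, he, hcl⟩ μ hadd h01 huniv hcnt => ?_, fun H => ?_⟩
  · exact exists_isDiracAt_of_isClosedEmbedding ⟨he, hcl⟩ ⟨hadd, h01, huniv⟩ hcnt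
  · exact ⟨C(X, ℕ), ⟨ContinuousMap.const X 0⟩, natEval, isEmbedding_natEval hzd,
      isClosed_range_natEval fun μ hμ hc => H μ hμ.1 hμ.2 hμ.3 hc⟩

/-- A nonempty zero-dimensional `T₁` space `X` is `ℕ`-compact if and only if every
countably additive 2-valued c-measure on `X` is a Dirac c-measure: for every
function `μ` on subsets of `X` which, on clopen sets, is finitely additive, takes
only the values `0` and `1` with `μ X = 1`, and is countably additive on pairwise
disjoint sequences of clopen sets with clopen union, there exists a point `p ∈ X`
such that for every clopen `A`, `μ A = 1` when `p ∈ A` and `μ A = 0` when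
`p ∉ A`. -/
theorem stmt16 {X : Type u} [TopologicalSpace X] [Nonempty X] [T1Space X]
    (hzd : IsTopologicalBasis {s : Set X | IsClopen s}) :
    IsECompact ℕ X ↔
    ∀ μ : Set X → ℝ,
      (∀ A B : Set X, IsClopen A → IsClopen B → Disjoint A B →
        μ (A ∪ B) = μ A + μ B) →
      (∀ A : Set X, IsClopen A → μ A = 0 ∨ μ A = 1) →
      μ Set.univ = 1 →
      (∀ A : ℕ → Set X, (∀ n, IsClopen (A n)) →
        (∀ m n, m ≠ n → Disjoint (A m) (A n)) → IsClopen (⋃ n, A n) →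
        HasSum (fun n => μ (A n)) (μ (⋃ n, A n))) →
      ∃ p : X, ∀ A : Set X, IsClopen A →
        (p ∈ A → μ A = 1) ∧ (p ∉ A → μ A = 0) :=
  stmt16_general hzd
end

section
/- Let X be a nonempty ℕ-compact space and let C(X, ℝ_disc) denote the ring, under pointwise operations, of continuous functions from X to ℝ equipped with the discrete topology. Let χ : C(X, ℝ_disc) → ℝ be a character, i.e. χ(f + g) = χ(f) + χ(g) and χ(f · g) = χ(f) · χ(g) for all f, g, and χ applied to the constant function with value c equals c for every c ∈ ℝ. Then there exists a unique point w ∈ X such that χ(h) = h(w) for every h ∈ C(X, ℝ_disc). -/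
open Topology TopologicalSpace Set

universe u

section Aux

variable {X : Type u} [TopologicalSpace X]

/-- Any finite family of locally constant functions simultaneously attains the value
assigned by a character at some point. -/
lemma exists_point_finset (χ : LocallyConstant X ℝ →+* ℝ)
    (hconst : ∀ c : ℝ, χ (LocallyConstant.const X c) = c)
    (S : Finset (LocallyConstant X ℝ)) :
    ∃ x : X, ∀ f ∈ S, f x = χ f := by
  classical
  by_contra hc
  push_neg at hc
  set g : LocallyConstant X ℝ :=
    ∑ f ∈ S, (f - LocallyConstant.const X (χ f)) ^ 2 with hg
  have hgx : ∀ x : X, g x ≠ 0 := by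
    intro x
    obtain ⟨f, hfS, hfx⟩ := hc x
    have hpos : 0 < g x := by
      have hgx : g x = ∑ f ∈ S, (f x - χ f) ^ 2 := by
        have h1 := map_sum ((Pi.evalRingHom (fun _ : X => ℝ) x).comp
          LocallyConstant.coeFnRingHom)
          (fun f => (f - LocallyConstant.const X (χ f)) ^ 2) S
        have h2 : g x = ((Pi.evalRingHom (fun _ : X => ℝ) x).comp
            LocallyConstant.coeFnRingHom)
            (∑ f ∈ S, (f - LocallyConstant.const X (χ f)) ^ 2) := rfl
        rw [h2, h1]
        refine Finset.sum_congr rfl fun f _ => ?_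
        rw [map_pow, map_sub]
        rfl
      rw [hgx]
      exact Finset.sum_pos' (fun i _ => sq_nonneg _)
        ⟨f, hfS, (sq_nonneg _).lt_of_ne
          (Ne.symm (pow_ne_zero 2 (sub_ne_zero.mpr hfx)))⟩
    exact hpos.ne'
  -- g is invertible
  set ginv : LocallyConstant X ℝ := g.map (·⁻¹) with hginv
  have hmulone : g * ginv = 1 := by
    ext x
    simp only [LocallyConstant.coe_mul, Pi.mul_apply, hginv, LocallyConstant.map_apply,
      Function.comp_apply, LocallyConstant.coe_one, Pi.one_apply]
    exact mul_inv_cancel₀ (hgx x)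
  have hχg : χ g = 0 := by
    rw [hg, map_sum]
    refine Finset.sum_eq_zero fun f _ => ?_
    rw [map_pow, map_sub, hconst]
    simp
  have : (1 : ℝ) = 0 := by
    calc (1 : ℝ) = χ 1 := (map_one χ).symm
    _ = χ g * χ ginv := by rw [← hmulone, map_mul]
    _ = 0 := by rw [hχg, zero_mul]
  exact one_ne_zero this

end Aux

/-- Let `X` be a nonempty `ℕ`-compact space and let `χ` be a character of the ring
`C(X, ℝ_disc)` of locally constant real-valued functions on `X` (pointwise
operations): `χ` is additive, multiplicative and sends each constant function with
value `c` to `c`.  Then there is a unique point `w ∈ X` such that `χ h = h w` for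
every `h ∈ C(X, ℝ_disc)`. -/
theorem stmt17 {X : Type u} [TopologicalSpace X] [Nonempty X]
    (hX : IsECompact ℕ X)
    (χ : LocallyConstant X ℝ → ℝ)
    (hadd : ∀ f g : LocallyConstant X ℝ, χ (f + g) = χ f + χ g)
    (hmul : ∀ f g : LocallyConstant X ℝ, χ (f * g) = χ f * χ g)
    (hconst : ∀ c : ℝ, χ (LocallyConstant.const X c) = c) :
    ∃! w : X, ∀ h : LocallyConstant X ℝ, χ h = h w := by
  classical
  obtain ⟨J, hJ, e, hemb, hcl⟩ := hX
  -- package χ as a ring hom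
  let χ' : LocallyConstant X ℝ →+* ℝ :=
    { toFun := χ
      map_one' := by
        have := hconst 1
        rwa [show LocallyConstant.const X (1 : ℝ) = 1 from rfl] at this
      map_zero' := by
        have := hconst 0
        rwa [show LocallyConstant.const X (0 : ℝ) = 0 from rfl] at this
      map_add' := hadd
      map_mul' := hmul }
  have hconst' : ∀ c : ℝ, χ' (LocallyConstant.const X c) = c := hconst
  -- the coordinate functions, as locally constant real functions
  have hcoordcont : ∀ j : J, Continuous fun x : X => e x j := fun j =>
    (continuous_apply j).comp hemb.continuous
  let f : J → LocallyConstant X ℝ := fun j =>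
    ⟨fun x => (e x j : ℝ),
      IsLocallyConstant.comp
        ((IsLocallyConstant.iff_continuous _).2 (hcoordcont j)) Nat.cast⟩
  -- the candidate point in ℕ^J
  have hnat : ∀ j : J, ∃ n : ℕ, (n : ℝ) = χ' (f j) := by
    intro j
    obtain ⟨x, hx⟩ := exists_point_finset χ' hconst' {f j}
    exact ⟨e x j, hx (f j) (Finset.mem_singleton_self _)⟩
  choose p hp using hnat
  -- p is in the closure of the range of e
  have hpcl : p ∈ closure (Set.range e) := by
    rw [mem_closure_iff]
    intro U hU hpU
    obtain ⟨I, u, hI, hsub⟩ := isOpen_pi_iff.1 hU p hpU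
    obtain ⟨x, hx⟩ := exists_point_finset χ' hconst' (I.image f)
    refine ⟨e x, hsub fun j hj => ?_, Set.mem_range_self x⟩
    have hfx : f j x = χ' (f j) := hx (f j) (Finset.mem_image_of_mem f hj)
    have : ((e x j : ℕ) : ℝ) = ((p j : ℕ) : ℝ) := by
      rw [hp j]; exact hfx
    have hej : e x j = p j := Nat.cast_injective this
    rw [hej]
    exact (hI j hj).2
  rw [hcl.closure_eq] at hpcl
  obtain ⟨w, hw⟩ := hpcl
  have hmain : ∀ h : LocallyConstant X ℝ, χ h = h w := by
    intro h
    by_contra hne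
    -- the clopen set where h differs from χ h contains w; derive contradiction
    have hZopen : IsOpen (h ⁻¹' {χ h}ᶜ) := h.isLocallyConstant _
    have hwU : w ∈ h ⁻¹' {χ h}ᶜ := by
      simp only [Set.mem_preimage, Set.mem_compl_iff, Set.mem_singleton_iff]
      exact fun hhw => hne hhw.symm
    -- pull back along the embedding
    obtain ⟨V, hVopen, hVeq⟩ := hemb.isInducing.isOpen_iff.1 hZopen
    have hewV : e w ∈ V := by rw [← hVeq] at hwU; exact hwU
    obtain ⟨I, u, hI, hsub⟩ := isOpen_pi_iff.1 hVopen (e w) hewV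
    obtain ⟨x, hx⟩ := exists_point_finset χ' hconst' (insert h (I.image f))
    have hhx : h x = χ h := hx h (Finset.mem_insert_self _ _)
    have hxV : e x ∈ V := by
      refine hsub fun j hj => ?_
      have hfx : f j x = χ' (f j) :=
        hx (f j) (Finset.mem_insert_of_mem (Finset.mem_image_of_mem f hj))
      have h2 : ((e w j : ℕ) : ℝ) = χ' (f j) := by rw [hw]; exact hp j
      have hej : e x j = e w j := Nat.cast_injective (hfx.trans h2.symm)
      rw [hej]
      exact (hI j hj).2
    have : x ∈ h ⁻¹' {χ h}ᶜ := by rw [← hVeq]; exact hxV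
    exact this hhx
  refine ⟨w, hmain, ?_⟩
  intro w' hw'
  have : e w' = e w := by
    funext j
    have h1 : (f j) w' = (f j) w := by rw [← hw' (f j), ← hmain (f j)]
    exact Nat.cast_injective h1
  exact hemb.injective this
end

section
/- Let X be a nonempty zero-dimensional T1 space. Then X is ℕ-compact if and only if every real ideal of the ring C(X, ℝ_disc) is fixed, where an ideal M of C(X, ℝ_disc) is real if the quotient ring C(X, ℝ_disc)/M is isomorphic as a ring to ℝ, and M is fixed if there exists p ∈ X with M = {f ∈ C(X, ℝ_disc) : f(p) = 0}. -/
/-!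
Real ideals of `C(X, ℝ_disc)` are the kernels of ring homomorphisms `φ : C(X, ℝ_disc) → ℝ`, and
`ker φ` is fixed at `p` exactly when `φ f = f p` for all `f`.

If `X` is a closed subspace of `ℕ^J`, the level sets `{f = φ f}` generate a proper filter: each
is nonempty because `f - φ f` is not a unit, and two of them contain a third by the sum of
squares trick. Along it every `ℕ`-valued locally constant function, in particular every
coordinate, is eventually constant, so it converges in `ℕ^J`, hence to a point `p` of `X`, and
then `φ f = f p`.

Conversely, a clopen base makes evaluation `X → ℕ^{C(X, ℕ_disc)}` an embedding. A point `q` in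
the closure of its image gives a filter along which every `g` is eventually `q g`. A proper
filter along which all `ℕ`-valued functions are eventually constant is closed under countable
intersections, so on a set of size at most `2^ℵ₀` it is principal (look at the binary digits);
thus every real-valued locally constant function is eventually constant, and its eventual
value is a ring homomorphism to `ℝ`. By hypothesis it is evaluation at some `p`, and `q` is
the image of `p`.
-/

open Topology TopologicalSpace Set

universe u

open Filter Cardinal

namespace Filter

variable {α : Type*} {l : Filter α}

theorem iInter_mem_of_eventuallyConst_nat (h : ∀ f : α → ℕ, EventuallyConst f l)
    {s : ℕ → Set α} (hs : ∀ n, s n ∈ l) : ⋂ n, s n ∈ l := by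
  classical
  -- `f x` records the first `s n` that misses `x`, shifted by one.
  let f : α → ℕ := fun x => if hx : ∃ n, x ∉ s n then Nat.find hx + 1 else 0
  obtain ⟨c, hc⟩ := (h f).eventuallyEq_const
  cases c with
  | zero =>
    filter_upwards [hc] with x hx
    refine mem_iInter.2 fun n => by_contra fun hn => ?_
    simp [f, dif_pos (⟨n, hn⟩ : ∃ n, x ∉ s n)] at hx
  | succ k =>
    filter_upwards [hc, hs k] with x hx hxk
    by_cases hmiss : ∃ n, x ∉ s n
    · simp only [f, dif_pos hmiss, Nat.succ_inj] at hx
      exact absurd hxk (hx ▸ Nat.find_spec hmiss)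
    · simp [f, dif_neg hmiss] at hx

theorem countableInterFilter_of_eventuallyConst_nat (h : ∀ f : α → ℕ, EventuallyConst f l) :
    CountableInterFilter l where
  countable_sInter_mem S hS hSl := by
    rcases S.eq_empty_or_nonempty with rfl | hne
    · simp
    obtain ⟨s, rfl⟩ := hS.exists_eq_range hne
    rw [sInter_range]
    exact iInter_mem_of_eventuallyConst_nat h fun n => hSl _ (mem_range_self n)

theorem subsingleton_of_eventuallyConst_nat {β : Type*} {l : Filter β} (hβ : #β ≤ 𝔠)
    (h : ∀ f : β → ℕ, EventuallyConst f l) : l.Subsingleton := by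
  have : CountableInterFilter l := countableInterFilter_of_eventuallyConst_nat h
  obtain ⟨code⟩ : Nonempty (β ↪ Set ℕ) := by
    rw [← lift_mk_le', mk_set, mk_nat, two_power_aleph0, lift_continuum]
    simpa using hβ
  have hdigit (n : ℕ) : EventuallyConst (fun b => n ∈ code b) l :=
    EventuallyConst.of_indicator_const (c := 1) (h _) one_ne_zero
  choose P hP using fun n => (hdigit n).eventuallyEq_const
  refine ⟨{b | ∀ n, (n ∈ code b) = P n}, eventually_countable_forall.2 hP, ?_⟩
  intro b hb b' hb'
  exact code.injective (Set.ext fun n => by rw [hb n, hb' n])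

end Filter

namespace LocallyConstant

variable {X : Type*} [TopologicalSpace X]

theorem isUnit_of_forall_ne_zero {K : Type*} [Field K] {f : LocallyConstant X K}
    (hf : ∀ x, f x ≠ 0) : IsUnit f :=
  .of_mul_eq_one f⁻¹ (by ext x; simp [hf x])

section RealRingHom

variable (φ : LocallyConstant X ℝ →+* ℝ)

theorem ringHom_apply_const (c : ℝ) : φ (const X c) = c :=
  DFunLike.congr_fun (Subsingleton.elim (φ.comp constRingHom) (RingHom.id ℝ)) c

theorem exists_apply_eq_ringHom (f : LocallyConstant X ℝ) : ∃ x, f x = φ f := by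
  by_contra! hf
  have hunit := (isUnit_of_forall_ne_zero (f := f - const X (φ f))
    fun x => sub_ne_zero.2 (hf x)).map φ
  simp [ringHom_apply_const] at hunit

/-- The zero set of `(f - φ f)² + (g - φ g)²` is the common level set of `f` and `g`. -/
theorem exists_levelSet_subset_inter (f g : LocallyConstant X ℝ) :
    ∃ h : LocallyConstant X ℝ, {x | h x = φ h} ⊆ {x | f x = φ f} ∩ {x | g x = φ g} := by
  refine ⟨(f - const X (φ f)) ^ 2 + (g - const X (φ g)) ^ 2, fun x hx => ?_⟩
  simp only [map_add, map_pow, map_sub, ringHom_apply_const, sub_self] at hx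
  have hx' : (f x - φ f) ^ 2 + (g x - φ g) ^ 2 = 0 := by simpa [sq, sub_apply] using hx
  obtain ⟨hf, hg⟩ := (add_eq_zero_iff_of_nonneg (sq_nonneg _) (sq_nonneg _)).1 hx'
  exact ⟨sub_eq_zero.1 (pow_eq_zero_iff two_ne_zero |>.1 hf),
    sub_eq_zero.1 (pow_eq_zero_iff two_ne_zero |>.1 hg)⟩

def levelFilter : Filter X := ⨅ f : LocallyConstant X ℝ, 𝓟 {x | f x = φ f}

instance levelFilter_neBot : (levelFilter φ).NeBot := by
  refine iInf_neBot_of_directed' (fun f g => ?_) fun f => principal_neBot_iff.2 ?_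
  · obtain ⟨h, hh⟩ := exists_levelSet_subset_inter φ f g
    exact ⟨h, principal_mono.2 (hh.trans inter_subset_left),
      principal_mono.2 (hh.trans inter_subset_right)⟩
  · exact exists_apply_eq_ringHom φ f

theorem eventually_apply_eq_ringHom (f : LocallyConstant X ℝ) :
    ∀ᶠ x in levelFilter φ, f x = φ f :=
  mem_iInf_of_mem f (mem_principal_self _)

theorem eventuallyConst_levelFilter (g : LocallyConstant X ℕ) :
    EventuallyConst g (levelFilter φ) := by
  obtain ⟨x₀, hx₀⟩ := (eventually_apply_eq_ringHom φ (g.map Nat.cast)).exists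
  refine eventuallyConst_iff_exists_eventuallyEq.2 ⟨g x₀, ?_⟩
  filter_upwards [eventually_apply_eq_ringHom φ (g.map Nat.cast)] with x hx
  exact Nat.cast_injective (hx.trans hx₀.symm)

end RealRingHom

theorem exists_le_nhds_of_isClosedEmbedding {J : Type*} {e : X → J → ℕ}
    (he : IsClosedEmbedding e) (l : Filter X) [l.NeBot]
    (hl : ∀ g : LocallyConstant X ℕ, EventuallyConst g l) : ∃ p, l ≤ 𝓝 p := by
  have hcoord (j : J) : EventuallyConst (fun x => e x j) l :=
    hl ⟨fun x => e x j,
      (IsLocallyConstant.iff_continuous _).2 ((continuous_apply j).comp he.continuous)⟩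
  choose q hq using fun j => (hcoord j).eventuallyEq_const
  have hlim : Tendsto e l (𝓝 q) :=
    tendsto_pi_nhds.2 fun j => by rw [nhds_discrete, tendsto_pure]; exact hq j
  obtain ⟨p, rfl⟩ := he.isClosed_range.mem_of_tendsto hlim (.of_forall mem_range_self)
  exact ⟨p, he.isInducing.tendsto_nhds_iff.2 hlim⟩

theorem exists_eq_eval_of_isClosedEmbedding {J : Type*} {e : X → J → ℕ}
    (he : IsClosedEmbedding e) (φ : LocallyConstant X ℝ →+* ℝ) : ∃ p, ∀ f, φ f = f p := by
  obtain ⟨p, hp⟩ := exists_le_nhds_of_isClosedEmbedding he _ (eventuallyConst_levelFilter φ)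
  refine ⟨p, fun f => ?_⟩
  obtain ⟨x, hxφ, hxp⟩ :=
    ((eventually_apply_eq_ringHom φ f).and (hp (f.isLocallyConstant.eventually_eq p))).exists
  exact hxφ.symm.trans hxp

section limRingHom

variable {R : Type*} [Semiring R] (l : Filter X) [l.NeBot]
  (h : ∀ f : LocallyConstant X R, EventuallyConst f l)

noncomputable def limRingHom : LocallyConstant X R →+* R where
  toFun f := (h f).eventuallyEq_const.choose
  map_one' := const_eventuallyEq.1 <| (h 1).eventuallyEq_const.choose_spec.symm.trans
    (.of_eq rfl)
  map_mul' f g := const_eventuallyEq.1 <| (h (f * g)).eventuallyEq_const.choose_spec.symm.trans <|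
    (h f).eventuallyEq_const.choose_spec.mul (h g).eventuallyEq_const.choose_spec
  map_zero' := const_eventuallyEq.1 <| (h 0).eventuallyEq_const.choose_spec.symm.trans
    (.of_eq rfl)
  map_add' f g := const_eventuallyEq.1 <| (h (f + g)).eventuallyEq_const.choose_spec.symm.trans <|
    (h f).eventuallyEq_const.choose_spec.add (h g).eventuallyEq_const.choose_spec

theorem limRingHom_eq {f : LocallyConstant X R} {c : R} (hf : ∀ᶠ x in l, f x = c) :
    limRingHom l h f = c :=
  const_eventuallyEq.1 <| (h f).eventuallyEq_const.choose_spec.symm.trans hf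

end limRingHom

theorem eventuallyConst_of_eventuallyConst_nat {Y : Type*} (hY : #Y ≤ 𝔠) {l : Filter X}
    (h : ∀ g : LocallyConstant X ℕ, EventuallyConst g l) (f : LocallyConstant X Y) :
    EventuallyConst f l :=
  subsingleton_of_eventuallyConst_nat hY fun H => h (f.map H)

theorem isEmbedding_eval_nat [T0Space X] (hX : IsTopologicalBasis {s : Set X | IsClopen s}) :
    IsEmbedding fun x (g : LocallyConstant X ℕ) => g x := by
  have hcont : Continuous fun x (g : LocallyConstant X ℕ) => g x :=
    continuous_pi fun g => g.continuous
  refine IsInducing.isEmbedding <| isInducing_iff_nhds.2 fun x =>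
    le_antisymm (hcont.tendsto x).le_comap <| hX.nhds_hasBasis.ge_iff.2 fun U ⟨hU, hxU⟩ => ?_
  refine Filter.mem_comap.2
    ⟨(fun y => y (charFn ℕ hU)) ⁻¹' {1}, ?_, fun y hy => (charFn_eq_one ℕ y hU).1 hy⟩
  exact ((isOpen_discrete {1}).preimage (continuous_apply (charFn ℕ hU))).mem_nhds
    ((charFn_eq_one ℕ x hU).2 hxU)

theorem isClosed_range_eval_nat
    (h : ∀ φ : LocallyConstant X ℝ →+* ℝ, ∃ p, ∀ f, φ f = f p) :
    IsClosed (range fun x (g : LocallyConstant X ℕ) => g x) := by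
  refine isClosed_of_closure_subset fun q hq => ?_
  set l := Filter.comap (fun x (g : LocallyConstant X ℕ) => g x) (𝓝 q)
  have : l.NeBot := comap_neBot_iff.2 fun t ht => by
    obtain ⟨_, hyt, x, rfl⟩ := mem_closure_iff_nhds.1 hq t ht
    exact ⟨x, hyt⟩
  have hl (g : LocallyConstant X ℕ) : ∀ᶠ x in l, g x = q g := by
    have := tendsto_pi_nhds.1 (tendsto_comap : Tendsto _ l (𝓝 q)) g
    rwa [nhds_discrete ℕ, tendsto_pure] at this
  have hR := eventuallyConst_of_eventuallyConst_nat (Y := ℝ) Cardinal.mk_real.le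
    fun g => eventuallyConst_iff_exists_eventuallyEq.2 ⟨q g, hl g⟩
  obtain ⟨p, hp⟩ := h (limRingHom l hR)
  refine ⟨p, funext fun g => Nat.cast_injective (R := ℝ) ?_⟩
  change (g.map Nat.cast : LocallyConstant X ℝ) p = _
  rw [← hp]
  exact limRingHom_eq l hR <| (hl g).mono fun x hx => by simp [hx]

theorem forall_realIdeal_fixed_iff :
    (∀ M : Ideal (LocallyConstant X ℝ), Nonempty ((LocallyConstant X ℝ ⧸ M) ≃+* ℝ) →
      ∃ p : X, ∀ f : LocallyConstant X ℝ, f ∈ M ↔ f p = 0) ↔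
    ∀ φ : LocallyConstant X ℝ →+* ℝ, ∃ p, ∀ f, φ f = f p := by
  constructor
  · intro hM φ
    have hφ : Function.Surjective φ := fun c => ⟨const X c, ringHom_apply_const φ c⟩
    obtain ⟨p, hp⟩ := hM (RingHom.ker φ) ⟨RingHom.quotientKerEquivOfSurjective hφ⟩
    refine ⟨p, fun f => ?_⟩
    have := (hp (f - const X (φ f))).1 (by simp [RingHom.mem_ker, ringHom_apply_const])
    rw [sub_apply, coe_const, Function.const_apply, sub_eq_zero] at this
    exact this.symm
  · rintro hφ M ⟨ψ⟩
    obtain ⟨p, hp⟩ := hφ (ψ.toRingHom.comp (Ideal.Quotient.mk M))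
    refine ⟨p, fun f => ?_⟩
    rw [← hp, ← Ideal.Quotient.eq_zero_iff_mem]
    simp

end LocallyConstant

open LocallyConstant

theorem stmt18_general {X : Type u} [TopologicalSpace X] [T1Space X]
    (hzd : IsTopologicalBasis {s : Set X | IsClopen s}) :
    IsECompact ℕ X ↔
    ∀ M : Ideal (LocallyConstant X ℝ),
      Nonempty ((LocallyConstant X ℝ ⧸ M) ≃+* ℝ) →
      ∃ p : X, ∀ f : LocallyConstant X ℝ, f ∈ M ↔ f p = 0 := by
  rw [forall_realIdeal_fixed_iff]
  constructor
  · rintro ⟨J, -, e, he, hclosed⟩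
    exact exists_eq_eval_of_isClosedEmbedding ⟨he, hclosed⟩
  · intro h
    exact ⟨_, inferInstance, _, isEmbedding_eval_nat hzd, isClosed_range_eval_nat h⟩

/-- A nonempty zero-dimensional `T₁` space `X` is `ℕ`-compact if and only if every
real ideal `M` of the ring `C(X, ℝ_disc)` of locally constant real-valued functions
on `X` (i.e. every ideal whose quotient ring is isomorphic to `ℝ`) is fixed, that
is, of the form `{f : f p = 0}` for some point `p ∈ X`. -/
theorem stmt18 {X : Type u} [TopologicalSpace X] [Nonempty X] [T1Space X]
    (hzd : IsTopologicalBasis {s : Set X | IsClopen s}) :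
    IsECompact ℕ X ↔
    ∀ M : Ideal (LocallyConstant X ℝ),
      Nonempty ((LocallyConstant X ℝ ⧸ M) ≃+* ℝ) →
      ∃ p : X, ∀ f : LocallyConstant X ℝ, f ∈ M ↔ f p = 0 :=
  stmt18_general hzd
end
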